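/- arXiv:math/0609547 — 7 statements merged into one kernel-verified Lean document; each statement's English description precedes it below -/
import Mathlib

section
/- Let G be a finite connected network with distinct positive edge-lengths and let T be its (unique) minimum spanning tree. Then for any two vertices v and w, perc(v,w) equals the maximum edge-length along the unique path in T from v to w. -/
open SimpleGraph Finset

/-- The subgraph of `G` consisting of edges of length `< t`. -/
def Gt {V : Type*} (G : SimpleGraph V) (len : Sym2 V → ℝ) (t : ℝ) : SimpleGraph V where
  Adj v w := G.Adj v w ∧ len s(v, w) < t
  symm := ⟨fun v w h => ⟨h.1.symm, by rw [Sym2.eq_swap]; exact h.2⟩⟩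
  loopless := ⟨fun v h => G.loopless.irrefl v h.1⟩

/-- `perc(v,w)`: the infimum of `t` such that `v` and `w` lie in the same component of `G_t`. -/
noncomputable def perc {V : Type*} (G : SimpleGraph V) (len : Sym2 V → ℝ) (v w : V) : ℝ :=
  sInf {t | (Gt G len t).Reachable v w}

/-- `T` (a finite set of edges) is a spanning tree of `G`. -/
def IsST {V : Type*} (G : SimpleGraph V) (T : Finset (Sym2 V)) : Prop :=
  ↑T ⊆ G.edgeSet ∧ (SimpleGraph.fromEdgeSet (↑T : Set (Sym2 V))).IsTree

/-- Total length of a set of edges. -/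
noncomputable def lenSum {V : Type*} (len : Sym2 V → ℝ) (T : Finset (Sym2 V)) : ℝ :=
  ∑ e ∈ T, len e

/-- `T` is a minimum spanning tree of `G`. -/
def IsMST {V : Type*} (G : SimpleGraph V) (len : Sym2 V → ℝ) (T : Finset (Sym2 V)) : Prop :=
  IsST G T ∧ ∀ T', IsST G T' → lenSum len T ≤ lenSum len T'

/-- `percE e`: `perc(v,w)` for an edge `e = (v,w)`. -/
noncomputable def percE {V : Type*} (G : SimpleGraph V) (len : Sym2 V → ℝ) (e : Sym2 V) : ℝ :=
  sInf {t | ∃ v w, e = s(v, w) ∧ (Gt G len t).Reachable v w}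

/-! The path `p` lies in `G_t` as soon as `t` exceeds every length on it. Conversely, deleting an
edge `e` of `p` from the tree `T` separates `v` from `w`, so every `v`–`w` walk in `G_t` crosses
this cut along some edge `f` with `len f < t`. Exchanging `e` for `f` gives another spanning tree,
so minimality of `T` forces `len e ≤ len f < t`. Hence the set of `t` for which `v` and `w` are
connected in `G_t` is exactly the open ray above the largest length on `p`. -/

namespace SimpleGraph

variable {V : Type*} {G H K : SimpleGraph V}

lemma Walk.exists_adj_reachable_not_reachable {u v : V} (q : K.Walk u v)
    (h : ¬H.Reachable u v) : ∃ x y, K.Adj x y ∧ H.Reachable u x ∧ ¬H.Reachable u y := by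
  obtain ⟨d, -, hx, hy⟩ := q.exists_boundary_dart {x | H.Reachable u x} (Reachable.refl u) h
  exact ⟨d.fst, d.snd, d.adj, hx, hy⟩

lemma IsAcyclic.not_reachable_deleteEdges_of_mem_edges (hG : G.IsAcyclic) {v w : V}
    {p : G.Walk v w} (hp : p.IsPath) {e : Sym2 V} (he : e ∈ p.edges) :
    ¬(G.deleteEdges {e}).Reachable v w := by
  classical
  rintro ⟨q⟩
  have hq : ∀ e' ∈ q.bypass.edges, e' ∈ G.edgeSet := fun e' he' =>
    edgeSet_mono (deleteEdges_le _) (q.bypass.edges_subset_edgeSet he')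
  have hpq : p = q.bypass.transfer G hq := congrArg Subtype.val <|
    (hG.subsingleton_path v w).elim ⟨p, hp⟩ ⟨_, q.bypass_isPath.transfer hq⟩
  rw [hpq, Walk.edges_transfer] at he
  simpa [edgeSet_deleteEdges] using q.edges_subset_edgeSet (q.edges_bypass_subset_edges he)

lemma Preconnected.reachable_deleteEdges_or (hG : G.Preconnected) (z a b : V) :
    (G.deleteEdges {s(a, b)}).Reachable z a ∨ (G.deleteEdges {s(a, b)}).Reachable z b := by
  by_contra! h
  obtain ⟨x, y, hxy, hzx, hzy⟩ := (hG z a).some.exists_adj_reachable_not_reachable h.1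
  by_cases he : s(x, y) = s(a, b)
  · rcases Sym2.eq_iff.mp he with ⟨rfl, -⟩ | ⟨rfl, -⟩
    exacts [h.1 hzx, h.2 hzx]
  · exact hzy (hzx.trans (deleteEdges_adj.mpr ⟨hxy, he⟩).reachable)

lemma IsTree.deleteEdges_sup_edge (hG : G.IsTree) {a b x y : V}
    (hxy : ¬(G.deleteEdges {s(a, b)}).Reachable x y) :
    (G.deleteEdges {s(a, b)} ⊔ edge x y).IsTree := by
  set H := G.deleteEdges {s(a, b)}
  have hsides := hG.connected.preconnected.reachable_deleteEdges_or (a := a) (b := b)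
  have hne : x ≠ y := by rintro rfl; exact hxy .rfl
  have hxyH : (H ⊔ edge x y).Reachable x y := Adj.reachable (by simp [edge_adj, hne])
  have hab : (H ⊔ edge x y).Reachable a b := by
    rcases hsides x with hx | hx <;> rcases hsides y with hy | hy
    · exact absurd (hx.trans hy.symm) hxy
    · exact (hx.symm.mono le_sup_left).trans (hxyH.trans (hy.mono le_sup_left))
    · exact (hy.symm.mono le_sup_left).trans (hxyH.symm.trans (hx.mono le_sup_left))
    · exact absurd (hx.trans hy.symm) hxy
  refine ⟨(connected_iff_exists_forall_reachable _).mpr ⟨a, fun z => ?_⟩,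
    (hG.isAcyclic.anti (deleteEdges_le _)).sup_edge_of_not_reachable hxy⟩
  rcases hsides z with hz | hz
  · exact (hz.mono le_sup_left).symm
  · exact hab.trans (hz.mono le_sup_left).symm

end SimpleGraph

section MinimumSpanningTree

variable {V : Type*} {G : SimpleGraph V} {len : Sym2 V → ℝ} {T : Finset (Sym2 V)}

lemma mem_edgeSet_Gt {t : ℝ} {e : Sym2 V} :
    e ∈ (Gt G len t).edgeSet ↔ e ∈ G.edgeSet ∧ len e < t := by
  induction e using Sym2.ind
  rfl

lemma SimpleGraph.Walk.reachable_Gt {H : SimpleGraph V} (hHG : H ≤ G) {v w : V}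
    (p : H.Walk v w) {t : ℝ} (hp : ∀ e ∈ p.edges, len e < t) : (Gt G len t).Reachable v w :=
  ⟨p.transfer _ fun e he =>
    mem_edgeSet_Gt.mpr ⟨edgeSet_mono hHG (p.edges_subset_edgeSet he), hp e he⟩⟩

lemma IsST.fromEdgeSet_le (hT : IsST G T) : fromEdgeSet ↑T ≤ G :=
  (SimpleGraph.fromEdgeSet_le G).mpr (Set.sdiff_subset.trans hT.1)

lemma fromEdgeSet_insert_erase [DecidableEq V] (x y : V) (e : Sym2 V) :
    fromEdgeSet ↑(insert s(x, y) (T.erase e)) = (fromEdgeSet ↑T).deleteEdges {e} ⊔ edge x y := by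
  rw [edge, deleteEdges_fromEdgeSet, ← fromEdgeSet_union, Finset.coe_insert, Finset.coe_erase,
    Set.union_singleton]

lemma IsST.exchange [DecidableEq V] (hT : IsST G T) {a b x y : V} (hxy : G.Adj x y)
    (hcut : ¬((fromEdgeSet ↑T).deleteEdges {s(a, b)}).Reachable x y) :
    IsST G (insert s(x, y) (T.erase s(a, b))) := by
  refine ⟨?_, ?_⟩
  · rw [Finset.coe_insert]
    exact Set.insert_subset hxy ((Finset.coe_subset.mpr (T.erase_subset _)).trans hT.1)
  · rw [fromEdgeSet_insert_erase]
    exact hT.2.deleteEdges_sup_edge hcut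

lemma IsMST.len_le_of_not_reachable_deleteEdges (hT : IsMST G len T) {a b x y : V}
    (he : s(a, b) ∈ T) (hxy : G.Adj x y)
    (hcut : ¬((fromEdgeSet ↑T).deleteEdges {s(a, b)}).Reachable x y) :
    len s(a, b) ≤ len s(x, y) := by
  classical
  have hnotin : s(x, y) ∉ T.erase s(a, b) := fun h => hcut <| Adj.reachable <| by
    simpa [hxy.ne, and_comm] using h
  have hmin := hT.2 _ (hT.1.exchange hxy hcut)
  rw [lenSum, lenSum, Finset.sum_insert hnotin, Finset.sum_erase_eq_sub he] at hmin
  linarith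

lemma IsMST.len_lt_of_reachable_Gt (hT : IsMST G len T) {v w : V}
    {p : (fromEdgeSet (↑T : Set (Sym2 V))).Walk v w} (hp : p.IsPath) {e : Sym2 V}
    (he : e ∈ p.edges) {t : ℝ} (ht : (Gt G len t).Reachable v w) : len e < t := by
  induction e using Sym2.ind with | _ a b => ?_
  have heT : s(a, b) ∈ T := ((edgeSet_fromEdgeSet _).subset (p.edges_subset_edgeSet he)).1
  obtain ⟨x, y, hxy, hvx, hvy⟩ := ht.some.exists_adj_reachable_not_reachable
    (hT.1.2.isAcyclic.not_reachable_deleteEdges_of_mem_edges hp he)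
  calc len s(a, b) ≤ len s(x, y) :=
        hT.len_le_of_not_reachable_deleteEdges heT hxy.1 fun hxy' => hvy (hvx.trans hxy')
    _ < t := hxy.2

end MinimumSpanningTree

theorem perc_eq_max_on_MST_path_general {V : Type*}
    (G : SimpleGraph V) (len : Sym2 V → ℝ)
    (T : Finset (Sym2 V)) (hT : IsMST G len T) (v w : V) (hvw : v ≠ w)
    (p : (SimpleGraph.fromEdgeSet (↑T : Set (Sym2 V))).Walk v w) (hp : p.IsPath) :
    IsGreatest {x : ℝ | ∃ e ∈ p.edges, len e = x} (perc G len v w) := by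
  obtain ⟨e, he, hmax⟩ := Set.exists_max_image {e | e ∈ p.edges} len p.edges.finite_toSet
    ⟨_, p.edges.head_mem (Walk.edges_eq_nil.not.mpr (Walk.not_nil_of_ne hvw))⟩
  have hM : IsGreatest {x : ℝ | ∃ e ∈ p.edges, len e = x} (len e) :=
    ⟨⟨e, he, rfl⟩, fun _ ⟨e', he', hx⟩ => hx ▸ hmax e' he'⟩
  suffices {t | (Gt G len t).Reachable v w} = Set.Ioi (len e) by
    rwa [perc, this, csInf_Ioi]
  ext t
  exact ⟨fun ht => hT.len_lt_of_reachable_Gt hp he ht,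
    fun ht => p.reachable_Gt hT.1.fromEdgeSet_le fun e' he' => (hmax e' he').trans_lt ht⟩

/-- For the unique MST `T` of a finite connected network with distinct positive edge-lengths,
`perc(v,w)` is the maximum edge-length along the unique path in `T` from `v` to `w`. -/
theorem perc_eq_max_on_MST_path {V : Type*} [Fintype V] [Nonempty V]
    (G : SimpleGraph V) (hG : G.Connected) (len : Sym2 V → ℝ)
    (hpos : ∀ e ∈ G.edgeSet, 0 < len e) (hdist : Set.InjOn len G.edgeSet)
    (T : Finset (Sym2 V)) (hT : IsMST G len T) (v w : V) (hvw : v ≠ w)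
    (p : (SimpleGraph.fromEdgeSet (↑T : Set (Sym2 V))).Walk v w) (hp : p.IsPath) :
    IsGreatest {x : ℝ | ∃ e ∈ p.edges, len e = x} (perc G len v w) :=
  perc_eq_max_on_MST_path_general G len T hT v w hvw p hp
end

section
/- Let G be a finite connected network with distinct positive edge-lengths, T its MST, and T' a spanning tree with |T' \ T| = k ≥ 1. Then there exist edges e' ∈ T' \ T and e ∈ T \ T' such that: (i) T* = T' \ {e'} ∪ {e} is a spanning tree; (ii) |T* \ T| = k - 1; and (iii) len(e') - len(e) ≥ exc(e'). -/
open SimpleGraph Finset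

/-!
Remove `e' = s(v, w) ∈ T' \ T` from `T'`; this splits the vertices into the component `A` of `v`
and its complement. Let `e` be the shortest edge of `G` across this cut. Replacing the crossing
edge of `T` on the `T`-path between the ends of `e` by `e` would shorten `T` if `e ∉ T`, so
`e ∈ T`, and `e ∉ T'` because it leaves `A`. Adding `e` back reconnects `T' - e'`, giving the
spanning tree `T*`. Finally every path from `v` to `w` crosses the cut, so it uses an edge of
length at least `len e`; hence `perc(e') ≥ len e`, which is `len e' - len e ≥ exc e'`.
-/

namespace SimpleGraph

variable {V : Type*}

theorem Reachable.exists_adj_of_mem_of_notMem {H : SimpleGraph V} {A : Set V} {v w : V}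
    (h : H.Reachable v w) (hv : v ∈ A) (hw : w ∉ A) :
    ∃ x y, H.Adj x y ∧ x ∈ A ∧ y ∉ A := by
  obtain ⟨p⟩ := h
  obtain ⟨d, -, hd₁, hd₂⟩ := p.exists_boundary_dart A hv hw
  exact ⟨d.fst, d.snd, d.adj, hd₁, hd₂⟩

theorem Reachable.deleteEdges_reachable_or {H : SimpleGraph V} {x c : V}
    (h : H.Reachable x c) (d : V) :
    (H.deleteEdges {s(c, d)}).Reachable x c ∨ (H.deleteEdges {s(c, d)}).Reachable x d := by
  obtain ⟨p⟩ := h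
  induction p with
  | nil => exact .inl .rfl
  | @cons x y c hxy p ih =>
    by_cases he : s(x, y) = s(c, d)
    · rcases Sym2.eq_iff.mp he with ⟨rfl, -⟩ | ⟨rfl, -⟩
      · exact .inl .rfl
      · exact .inr .rfl
    · have hxy' : (H.deleteEdges {s(c, d)}).Adj x y := (deleteEdges_adj ..).mpr ⟨hxy, he⟩
      exact ih.imp hxy'.reachable.trans hxy'.reachable.trans

theorem Connected.sup_edge_deleteEdges {H : SimpleGraph V} (hH : H.Connected) {c d u v : V}
    (huv : ¬ (H.deleteEdges {s(c, d)}).Reachable u v) :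
    (H.deleteEdges {s(c, d)} ⊔ edge u v).Connected := by
  set H' := H.deleteEdges {s(c, d)}
  have hle : H' ≤ H' ⊔ edge u v := le_sup_left
  have huv' : (H' ⊔ edge u v).Reachable u v :=
    Adj.reachable (Or.inr ((edge_adj ..).mpr ⟨.inl ⟨rfl, rfl⟩, fun h => huv (h ▸ .rfl)⟩))
  -- `u` and `v` hang off different ends of the deleted edge, so the new edge joins `c` and `d`.
  have hcd : (H' ⊔ edge u v).Reachable c d := by
    rcases (hH.preconnected u c).deleteEdges_reachable_or d with hu | hu <;>
      rcases (hH.preconnected v c).deleteEdges_reachable_or d with hv | hv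
    · exact absurd (hu.trans hv.symm) huv
    · exact ((hu.mono hle).symm.trans huv').trans (hv.mono hle)
    · exact ((hv.mono hle).symm.trans huv'.symm).trans (hu.mono hle)
    · exact absurd (hu.trans hv.symm) huv
  have hc : ∀ x, (H' ⊔ edge u v).Reachable x c := fun x =>
    ((hH.preconnected x c).deleteEdges_reachable_or d).elim (·.mono hle)
      fun h => (h.mono hle).trans hcd.symm
  exact (connected_iff _).mpr ⟨fun x y => (hc x).trans (hc y).symm, hH.nonempty⟩

theorem IsTree.sup_edge_deleteEdges {H : SimpleGraph V} (hH : H.IsTree) {c d u v : V}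
    (huv : ¬ (H.deleteEdges {s(c, d)}).Reachable u v) :
    (H.deleteEdges {s(c, d)} ⊔ edge u v).IsTree :=
  ⟨hH.connected.sup_edge_deleteEdges huv,
    (hH.isAcyclic.anti (deleteEdges_le _)).sup_edge_of_not_reachable huv⟩

theorem IsAcyclic.not_reachable_deleteEdges_of_mem_edges_s3 {H : SimpleGraph V} (hH : H.IsAcyclic)
    {a b : V} {p : H.Walk a b} (hp : p.IsPath) {e : Sym2 V} (he : e ∈ p.edges) :
    ¬ (H.deleteEdges {e}).Reachable a b := by
  classical
  induction e using Sym2.ind with | _ x y => ?_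
  rw [reachable_deleteEdges_iff_exists_walk]
  rintro ⟨q, hq⟩
  have hpq : p = q.bypass :=
    congrArg Subtype.val ((hH.subsingleton_path a b).elim ⟨p, hp⟩ q.toPath)
  exact hq (q.edges_bypass_subset_edges (hpq ▸ he))

end SimpleGraph

section SpanningTrees

variable {V : Type*} [DecidableEq V]

theorem fromEdgeSet_insert_erase_s3 (S : Finset (Sym2 V)) (f : Sym2 V) (a b : V) :
    fromEdgeSet ↑(insert s(a, b) (S.erase f)) =
      (fromEdgeSet (↑S : Set (Sym2 V))).deleteEdges {f} ⊔ edge a b := by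
  rw [coe_insert, coe_erase, ← Set.union_singleton, fromEdgeSet_union, deleteEdges_fromEdgeSet]
  rfl

theorem IsST.exchange_s3 {G : SimpleGraph V} {S : Finset (Sym2 V)} (hS : IsST G S) {c d a b : V}
    (hab : G.Adj a b) (hnr : ¬ ((fromEdgeSet ↑S).deleteEdges {s(c, d)}).Reachable a b) :
    IsST G (insert s(a, b) (S.erase s(c, d))) := by
  refine ⟨fun e he => ?_, ?_⟩
  · rcases mem_insert.mp he with rfl | he
    · exact hab
    · exact hS.1 (mem_of_mem_erase he)
  · rw [fromEdgeSet_insert_erase_s3]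
    exact hS.2.sup_edge_deleteEdges hnr

theorem lenSum_insert_erase (len : Sym2 V → ℝ) {S : Finset (Sym2 V)} {f g : Sym2 V}
    (hf : f ∈ S) (hg : g ∉ S) :
    lenSum len (insert g (S.erase f)) = lenSum len S - len f + len g := by
  unfold lenSum
  rw [sum_insert fun h => hg (mem_of_mem_erase h), ← sum_erase_add S len hf]
  ring

end SpanningTrees

section Cuts

variable {V : Type*}

def cutEdges (G : SimpleGraph V) (A : Set V) : Set (Sym2 V) :=
  {e ∈ G.edgeSet | ∃ x ∈ A, ∃ y ∉ A, e = s(x, y)}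

theorem IsMST.mem_of_min_cutEdges [DecidableEq V] {G : SimpleGraph V} {len : Sym2 V → ℝ}
    {T : Finset (Sym2 V)} (hT : IsMST G len T) (hdist : Set.InjOn len G.edgeSet) {A : Set V}
    {a b : V} (ha : a ∈ A) (hb : b ∉ A) (hab : G.Adj a b)
    (hmin : ∀ f ∈ cutEdges G A, len s(a, b) ≤ len f) : s(a, b) ∈ T := by
  by_contra habT
  obtain ⟨p⟩ := hT.1.2.connected.preconnected a b
  obtain ⟨⟨⟨c, d⟩, hcd⟩, hdp, hc, hd⟩ := p.toPath.1.exists_boundary_dart A ha hb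
  have hcdT : s(c, d) ∈ T := ((fromEdgeSet_adj _).mp hcd).1
  have hcdG : G.Adj c d := hT.1.1 hcdT
  have hnr : ¬ ((fromEdgeSet ↑T).deleteEdges {s(c, d)}).Reachable a b :=
    hT.1.2.isAcyclic.not_reachable_deleteEdges_of_mem_edges_s3 p.toPath.2
      (List.mem_map_of_mem hdp)
  have hlt : len s(a, b) < len s(c, d) :=
    (hmin _ ⟨hcdG, c, hc, d, hd, rfl⟩).lt_of_ne fun h => habT (hdist hab hcdG h ▸ hcdT)
  have hle := hT.2 _ (hT.1.exchange_s3 hab hnr)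
  rw [lenSum_insert_erase len hcdT habT] at hle
  linarith

theorem le_percE_of_le_cutEdges {G : SimpleGraph V} {len : Sym2 V → ℝ} (hG : G.Connected)
    (hbdd : BddAbove (len '' G.edgeSet)) {A : Set V} {v w : V} (hv : v ∈ A) (hw : w ∉ A)
    {m : ℝ} (hm : ∀ f ∈ cutEdges G A, m ≤ len f) : m ≤ percE G len s(v, w) := by
  obtain ⟨M, hM⟩ := hbdd
  have hGt : G ≤ Gt G len (M + 1) := fun x y hxy =>
    ⟨hxy, (hM ⟨_, hxy, rfl⟩).trans_lt (lt_add_one M)⟩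
  refine le_csInf ⟨M + 1, v, w, rfl, (hG.preconnected v w).mono hGt⟩ ?_
  rintro t ⟨p, q, hpq, hre⟩
  have hvw : (Gt G len t).Reachable v w := by
    rcases Sym2.eq_iff.mp hpq with ⟨rfl, rfl⟩ | ⟨rfl, rfl⟩
    exacts [hre, hre.symm]
  obtain ⟨x, y, ⟨hxy, hlt⟩, hx, hy⟩ := hvw.exists_adj_of_mem_of_notMem hv hw
  exact (hm _ ⟨hxy, x, hx, y, hy, rfl⟩).trans hlt.le

end Cuts

theorem mst_exchange_step_general {V : Type*} [Fintype V] [DecidableEq V]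
    (G : SimpleGraph V) (hG : G.Connected) (len : Sym2 V → ℝ)
    (hdist : Set.InjOn len G.edgeSet)
    (T T' : Finset (Sym2 V)) (hT : IsMST G len T) (hT' : IsST G T')
    (k : ℕ) (hk : 1 ≤ k) (hcard : (T' \ T).card = k) :
    ∃ e' ∈ T' \ T, ∃ e ∈ T \ T',
      IsST G (insert e (T'.erase e')) ∧
      ((insert e (T'.erase e')) \ T).card = k - 1 ∧
      len e' - len e ≥ len e' - percE G len e' := by
  obtain ⟨e', he'⟩ := card_pos.mp (hcard ▸ hk)
  induction e' using Sym2.ind with | _ v w => ?_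
  obtain ⟨he'T', he'T⟩ := mem_sdiff.mp he'
  set H' := (fromEdgeSet (↑T' : Set (Sym2 V))).deleteEdges {s(v, w)}
  set A : Set V := {x | H'.Reachable v x}
  have hw : w ∉ A := isBridge_iff.mp (isAcyclic_iff_forall_adj_isBridge.mp hT'.2.isAcyclic
    ((fromEdgeSet_adj _).mpr ⟨he'T', (hT'.1 he'T').ne⟩))
  obtain ⟨x, y, hxy, hx, hy⟩ := (hG.preconnected v w).exists_adj_of_mem_of_notMem .rfl hw
  obtain ⟨e, ⟨hab, a, ha, b, hb, rfl⟩, hmin⟩ :=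
    (cutEdges G A).exists_min_image len (Set.toFinite _) ⟨_, hxy, x, hx, y, hy, rfl⟩
  have heT := hT.mem_of_min_cutEdges hdist ha hb hab hmin
  have hnr : ¬ H'.Reachable a b := fun h => hb (Reachable.trans ha h)
  have heT' : s(a, b) ∉ T' := fun h => hnr <| Adj.reachable <| (deleteEdges_adj ..).mpr
    ⟨(fromEdgeSet_adj _).mpr ⟨h, hab.ne⟩,
      fun hv => he'T (Set.mem_singleton_iff.mp hv ▸ heT)⟩
  refine ⟨s(v, w), he', s(a, b), mem_sdiff.mpr ⟨heT, heT'⟩, hT'.exchange_s3 hab hnr, ?_, ?_⟩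
  · rw [insert_sdiff_of_mem _ heT, erase_sdiff_comm, card_erase_of_mem he', hcard]
  · exact sub_le_sub_left (le_percE_of_le_cutEdges hG (G.edgeSet.toFinite.image len).bddAbove
      .rfl hw hmin) _

/-- Exchange step: if `T` is the MST and `T'` a spanning tree with `|T' \ T| = k ≥ 1`, then
there are `e' ∈ T' \ T` and `e ∈ T \ T'` such that `T* = T' \ {e'} ∪ {e}` is a spanning tree,
`|T* \ T| = k - 1`, and `len(e') - len(e) ≥ exc(e')`. -/
theorem mst_exchange_step {V : Type*} [Fintype V] [Nonempty V] [DecidableEq V]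
    (G : SimpleGraph V) (hG : G.Connected) (len : Sym2 V → ℝ)
    (hpos : ∀ e ∈ G.edgeSet, 0 < len e) (hdist : Set.InjOn len G.edgeSet)
    (T T' : Finset (Sym2 V)) (hT : IsMST G len T) (hT' : IsST G T')
    (k : ℕ) (hk : 1 ≤ k) (hcard : (T' \ T).card = k) :
    ∃ e' ∈ T' \ T, ∃ e ∈ T \ T',
      IsST G (insert e (T'.erase e')) ∧
      ((insert e (T'.erase e')) \ T).card = k - 1 ∧
      len e' - len e ≥ len e' - percE G len e' :=
  mst_exchange_step_general G hG len hdist T T' hT hT' k hk hcard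
end

section
/- Let ξ and W be independent real-valued random variables such that ξ has a probability density function bounded above by a constant b > 0. Then for any event A contained in {ξ > W}, E[(ξ - W)·1_A] ≥ P(A)² / (2b). -/
/-!
The law of `ξ - W` is a mixture of translates of the law of `ξ`, so it also has density at most
`b`; hence `P(A ∩ {ξ - W ≤ t}) ≤ P(0 < ξ - W ≤ t) ≤ b t`. By the layer-cake formula,
`E[(ξ - W) 1_A] = ∫₀^∞ P(A ∩ {ξ - W > t}) dt ≥ ∫₀^{P(A)/b} (P(A) - b t) dt = P(A)² / (2b)`.
-/

open MeasureTheory ProbabilityTheory Set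

theorem ProbabilityTheory.IndepFun.map_sub_le_smul {Ω G : Type*} [MeasurableSpace Ω] [AddGroup G]
    [MeasurableSpace G] [MeasurableAdd G] [MeasurableSub₂ G]
    {μ : Measure Ω} [IsProbabilityMeasure μ] {X Y : Ω → G} (hX : Measurable X) (hY : Measurable Y)
    (hXY : IndepFun X Y μ) {ν : Measure G} [ν.IsAddRightInvariant] {c : ENNReal}
    (hXν : μ.map X ≤ c • ν) :
    μ.map (X - Y) ≤ c • ν := by
  have : IsProbabilityMeasure (μ.map X) := Measure.isProbabilityMeasure_map hX.aemeasurable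
  have : IsProbabilityMeasure (μ.map Y) := Measure.isProbabilityMeasure_map hY.aemeasurable
  have hsub : Measurable fun q : G × G => q.1 - q.2 := measurable_fst.sub measurable_snd
  have hlaw : μ.map (X - Y) = ((μ.map X).prod (μ.map Y)).map fun q => q.1 - q.2 := by
    rw [← (indepFun_iff_map_prod_eq_prod_map_map hX.aemeasurable hY.aemeasurable).mp hXY,
      Measure.map_map hsub (hX.prodMk hY)]
    rfl
  refine Measure.le_iff.mpr fun s hs => ?_
  rw [hlaw, Measure.map_apply hsub hs, Measure.prod_apply_symm (hsub hs)]
  calc ∫⁻ y, μ.map X ((fun x => (x, y)) ⁻¹' ((fun q : G × G => q.1 - q.2) ⁻¹' s)) ∂μ.map Y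
      ≤ ∫⁻ _, c * ν s ∂μ.map Y := by
        refine lintegral_mono fun y => ?_
        calc μ.map X ((fun x => (x, y)) ⁻¹' ((fun q : G × G => q.1 - q.2) ⁻¹' s))
            ≤ (c • ν) ((fun x => x + -y) ⁻¹' s) := by
              simp only [preimage_preimage, ← sub_eq_add_neg]
              exact hXν _
          _ = c * ν s := by rw [Measure.smul_apply, measure_preimage_add_right, smul_eq_mul]
    _ = (c • ν) s := by simp

theorem lintegral_Ioc_ofReal_sub_mul {p b : ℝ} (hp : 0 ≤ p) (hb : 0 < b) :
    ∫⁻ t in Ioc 0 (p / b), ENNReal.ofReal (p - b * t) = ENNReal.ofReal (p ^ 2 / (2 * b)) := by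
  have hpb : 0 ≤ p / b := div_nonneg hp hb.le
  have hcont : Continuous fun t => p - b * t := by fun_prop
  rw [← ofReal_integral_eq_lintegral_ofReal hcont.integrableOn_Ioc]
  · rw [← intervalIntegral.integral_of_le hpb,
      intervalIntegral.integral_sub intervalIntegrable_const
        ((continuous_const_mul b).intervalIntegrable _ _), intervalIntegral.integral_const,
      intervalIntegral.integral_const_mul, integral_id]
    congr 1
    simp only [smul_eq_mul, sub_zero]
    field_simp
    ring
  · filter_upwards [ae_restrict_mem measurableSet_Ioc] with t ht
    have := (le_div_iff₀' hb).mp ht.2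
    simp only [Pi.zero_apply]
    linarith

theorem ofReal_sq_div_le_lintegral_ofReal {α : Type*} [MeasurableSpace α]
    {ν : Measure α} [IsFiniteMeasure ν] {X : α → ℝ} (hX : Measurable X) {b : ℝ} (hb : 0 < b)
    (hsmall : ∀ t, 0 ≤ t → ν {a | X a ≤ t} ≤ ENNReal.ofReal (b * t)) :
    ENNReal.ofReal ((ν univ).toReal ^ 2 / (2 * b)) ≤ ∫⁻ a, ENNReal.ofReal (X a) ∂ν := by
  set p := (ν univ).toReal
  have hX_nonneg : 0 ≤ᵐ[ν] X := by
    have hnull : ν {a | X a ≤ 0} = 0 := by simpa using hsmall 0 le_rfl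
    exact ae_iff.mpr (measure_mono_null (fun a ha => (not_le.mp ha).le) hnull)
  have htail : ∀ t, 0 ≤ t → ENNReal.ofReal (p - b * t) ≤ ν {a | t < X a} := by
    intro t ht
    have hcompl : {a | t < X a}ᶜ = {a | X a ≤ t} := by ext; simp
    calc ENNReal.ofReal (p - b * t) = ν univ - ENNReal.ofReal (b * t) := by
          rw [ENNReal.ofReal_sub _ (by positivity), ENNReal.ofReal_toReal (measure_ne_top ν univ)]
      _ ≤ ν univ - ν {a | X a ≤ t} := tsub_le_tsub_left (hsmall t ht) _
      _ ≤ ν {a | t < X a} := by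
          rw [tsub_le_iff_right, ← hcompl]
          exact measure_univ_le_add_compl _
  calc ENNReal.ofReal (p ^ 2 / (2 * b))
      = ∫⁻ t in Ioc 0 (p / b), ENNReal.ofReal (p - b * t) :=
        (lintegral_Ioc_ofReal_sub_mul ENNReal.toReal_nonneg hb).symm
    _ ≤ ∫⁻ t in Ioc 0 (p / b), ν {a | t < X a} :=
        setLIntegral_mono' measurableSet_Ioc fun t ht => htail t ht.1.le
    _ ≤ ∫⁻ t in Ioi 0, ν {a | t < X a} := lintegral_mono_set Ioc_subset_Ioi_self
    _ = ∫⁻ a, ENNReal.ofReal (X a) ∂ν :=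
        (lintegral_eq_lintegral_meas_lt ν hX_nonneg hX.aemeasurable).symm

theorem expectation_sub_indicator_ge_general {Ω : Type*} [MeasurableSpace Ω]
    (μ : Measure Ω) [IsProbabilityMeasure μ] (ξ W : Ω → ℝ)
    (hξ : Measurable ξ) (hW : Measurable W)
    (hindep : ProbabilityTheory.IndepFun ξ W μ)
    (b : ℝ) (hb : 0 < b)
    (hdens : μ.map ξ ≤ (ENNReal.ofReal b) • (volume : Measure ℝ))
    (A : Set Ω) (hAsub : A ⊆ {ω | W ω < ξ ω}) :
    ∫⁻ ω in A, ENNReal.ofReal (ξ ω - W ω) ∂μ ≥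
      ENNReal.ofReal ((μ A).toReal ^ 2 / (2 * b)) := by
  have hlaw := hindep.map_sub_le_smul hξ hW hdens
  have hsmall : ∀ t, 0 ≤ t → μ.restrict A {ω | (ξ - W) ω ≤ t} ≤ ENNReal.ofReal (b * t) := by
    intro t ht
    calc μ.restrict A {ω | (ξ - W) ω ≤ t} ≤ μ ((ξ - W) ⁻¹' Ioc 0 t) := by
          rw [Measure.restrict_apply (measurableSet_le (hξ.sub hW) measurable_const)]
          exact measure_mono fun ω hω => ⟨sub_pos.mpr (hAsub hω.2), hω.1⟩
      _ ≤ ENNReal.ofReal b * volume (Ioc 0 t) := by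
          rw [← Measure.map_apply (hξ.sub hW) measurableSet_Ioc]
          exact hlaw _
      _ = ENNReal.ofReal (b * t) := by simp [ENNReal.ofReal_mul hb.le]
  simpa [Measure.restrict_apply_univ] using
    ofReal_sq_div_le_lintegral_ofReal (hξ.sub hW) hb hsmall

/-- If `ξ` and `W` are independent real random variables and `ξ` has a density bounded by `b`,
then for any event `A ⊆ {ξ > W}`, `E[(ξ - W)·1_A] ≥ P(A)²/(2b)`. -/
theorem expectation_sub_indicator_ge {Ω : Type*} [MeasurableSpace Ω]
    (μ : Measure Ω) [IsProbabilityMeasure μ] (ξ W : Ω → ℝ)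
    (hξ : Measurable ξ) (hW : Measurable W)
    (hindep : ProbabilityTheory.IndepFun ξ W μ)
    (b : ℝ) (hb : 0 < b)
    (hdens : μ.map ξ ≤ (ENNReal.ofReal b) • (volume : Measure ℝ))
    (A : Set Ω) (hA : MeasurableSet A) (hAsub : A ⊆ {ω | W ω < ξ ω}) :
    ∫⁻ ω in A, ENNReal.ofReal (ξ ω - W ω) ∂μ ≥
      ENNReal.ofReal ((μ A).toReal ^ 2 / (2 * b)) :=
  expectation_sub_indicator_ge_general μ ξ W hξ hW hindep b hb hdens A hAsub
end

section
/- Let ξ be a real random variable whose density is bounded above by b > 0. Then for any measurable event A ⊆ {ξ > 0}, E[ξ·1_A] ≥ P(A)² / (2b). -/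
open MeasureTheory

/-- If `ξ` is a real random variable with density bounded by `b`, then for any event
`A ⊆ {ξ > 0}`, `E[ξ·1_A] ≥ P(A)²/(2b)`. -/
theorem expectation_indicator_ge {Ω : Type*} [MeasurableSpace Ω]
    (μ : Measure Ω) [IsProbabilityMeasure μ] (ξ : Ω → ℝ) (hξ : Measurable ξ)
    (b : ℝ) (hb : 0 < b)
    (hdens : μ.map ξ ≤ (ENNReal.ofReal b) • (volume : Measure ℝ))
    (A : Set Ω) (hA : MeasurableSet A) (hAsub : A ⊆ {ω | 0 < ξ ω}) :
    ∫⁻ ω in A, ENNReal.ofReal (ξ ω) ∂μ ≥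
      ENNReal.ofReal ((μ A).toReal ^ 2 / (2 * b)) := by
  set p : ℝ := (μ A).toReal with hp
  have hpA : μ A = ENNReal.ofReal p := (ENNReal.ofReal_toReal (measure_ne_top μ A)).symm
  have hp0 : 0 ≤ p := ENNReal.toReal_nonneg
  set c : ℝ := p / b with hc
  have hc0 : 0 ≤ c := div_nonneg hp0 hb.le
  -- layer cake
  have hnn : 0 ≤ᵐ[μ.restrict A] ξ := by
    filter_upwards [ae_restrict_mem hA] with ω hω
    exact (hAsub hω).le
  have key := lintegral_eq_lintegral_meas_lt (μ.restrict A) hnn hξ.aemeasurable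
  rw [key]
  -- pointwise lower bound for the tail measure
  have tail : ∀ t ∈ Set.Ioc 0 c,
      ENNReal.ofReal (p - b * t) ≤ (μ.restrict A) {a | t < ξ a} := by
    intro t ht
    have ht0 : 0 < t := ht.1
    have hrest : (μ.restrict A) {a | t < ξ a} = μ ({a | t < ξ a} ∩ A) :=
      Measure.restrict_apply (measurableSet_lt measurable_const hξ)
    have hsplit : μ A ≤ μ ({a | t < ξ a} ∩ A) + ENNReal.ofReal (b * t) := by
      have hsub : A \ {a | t < ξ a} ⊆ ξ ⁻¹' Set.Ioc 0 t := by
        intro ω hω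
        exact ⟨hAsub hω.1, not_lt.mp hω.2⟩
      calc μ A ≤ μ (A ∩ {a | t < ξ a}) + μ (A \ {a | t < ξ a}) :=
            measure_le_inter_add_diff μ A _
        _ = μ ({a | t < ξ a} ∩ A) + μ (A \ {a | t < ξ a}) := by rw [Set.inter_comm]
        _ ≤ μ ({a | t < ξ a} ∩ A) + ENNReal.ofReal (b * t) := by
            gcongr
            calc μ (A \ {a | t < ξ a}) ≤ μ (ξ ⁻¹' Set.Ioc 0 t) := measure_mono hsub
                _ = μ.map ξ (Set.Ioc 0 t) := (Measure.map_apply hξ measurableSet_Ioc).symm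
                _ ≤ (ENNReal.ofReal b • (volume : Measure ℝ)) (Set.Ioc 0 t) :=
                    hdens (Set.Ioc 0 t)
                _ = ENNReal.ofReal (b * t) := by
                    rw [Measure.smul_apply, smul_eq_mul, Real.volume_Ioc,
                      ← ENNReal.ofReal_mul hb.le]
                    ring_nf
    rw [hrest]
    have : μ A - ENNReal.ofReal (b * t) ≤ μ ({a | t < ξ a} ∩ A) :=
      tsub_le_iff_right.mpr hsplit
    calc ENNReal.ofReal (p - b * t) = ENNReal.ofReal p - ENNReal.ofReal (b * t) :=
          ENNReal.ofReal_sub _ (by positivity)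
      _ = μ A - ENNReal.ofReal (b * t) := by rw [hpA]
      _ ≤ _ := this
  -- lower bound the integral
  have hmeas : Measurable fun t : ℝ => (μ.restrict A) {a | t < ξ a} :=
    Antitone.measurable (fun s t hst =>
      measure_mono (fun a (ha : t < ξ a) => lt_of_le_of_lt hst ha))
  have step1 : ∫⁻ t in Set.Ioc 0 c, ENNReal.ofReal (p - b * t) ≤
      ∫⁻ t in Set.Ioi 0, (μ.restrict A) {a | t < ξ a} := by
    calc ∫⁻ t in Set.Ioc 0 c, ENNReal.ofReal (p - b * t)
        ≤ ∫⁻ t in Set.Ioc 0 c, (μ.restrict A) {a | t < ξ a} :=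
          setLIntegral_mono_ae hmeas.aemeasurable (ae_of_all _ tail)
      _ ≤ ∫⁻ t in Set.Ioi 0, (μ.restrict A) {a | t < ξ a} :=
          lintegral_mono_set Set.Ioc_subset_Ioi_self
  refine le_trans ?_ step1
  -- compute the left integral
  have hInt : IntegrableOn (fun t => p - b * t) (Set.Ioc 0 c) volume :=
    ((continuous_const.sub (continuous_const.mul continuous_id)).integrableOn_Ioc)
  have hnn2 : 0 ≤ᵐ[volume.restrict (Set.Ioc 0 c)] fun t => p - b * t := by
    filter_upwards [ae_restrict_mem measurableSet_Ioc] with t ht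
    simp only [Pi.zero_apply]
    have h1 : b * t ≤ b * c := by nlinarith [ht.2]
    have hbc : b * c = p := by rw [hc]; field_simp
    linarith
  rw [← ofReal_integral_eq_lintegral_ofReal hInt hnn2]
  have hval : ∫ t in Set.Ioc 0 c, (p - b * t) = p ^ 2 / (2 * b) := by
    rw [← intervalIntegral.integral_of_le hc0]
    have : ∫ t in (0:ℝ)..c, (p - b * t) = p * c - b * (c ^ 2 / 2) := by
      rw [intervalIntegral.integral_sub intervalIntegrable_const
          ((intervalIntegral.intervalIntegrable_id).const_mul b),
        intervalIntegral.integral_const_mul, integral_id, intervalIntegral.integral_const]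
      simp
      ring
    rw [this, hc]
    field_simp
    ring
  rw [hval]
end

section
/- For the m × m grid graph C_m² (n = m² vertices, 2m(m-1) edges), there exists a random spanning tree 𝒯 such that for every fixed spanning tree t of C_m², E|𝒯 \ t| ≥ a_n where a_n := (n-1) - 4(n^{1/2} - 1) - (n-1)²/(2n). Consequently, for every spanning tree t of C_m² there exists a spanning tree t* with |t* \ t| ≥ a_n; note a_n / n → 1/2 as n → ∞. -/
open SimpleGraph Finset

/-- The `m × m` grid graph `C_m²`: vertices `{1,…,m}²`, edges between vertices at
Euclidean distance `1`. -/
def grid (m : ℕ) : SimpleGraph (Fin m × Fin m) where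
  Adj v w := (v.1 = w.1 ∧ (v.2.1 + 1 = w.2.1 ∨ w.2.1 + 1 = v.2.1)) ∨
             (v.2 = w.2 ∧ (v.1.1 + 1 = w.1.1 ∨ w.1.1 + 1 = v.1.1))
  symm := by
    constructor; rintro v w (⟨h1, h2⟩ | ⟨h1, h2⟩)
    · exact Or.inl ⟨h1.symm, h2.symm⟩
    · exact Or.inr ⟨h1.symm, h2.symm⟩
  loopless := ⟨by rintro v (⟨h1, h2⟩ | ⟨h1, h2⟩) <;> omega⟩

/-- `a_n := (n-1) - 4(n^{1/2} - 1) - (n-1)²/(2n)`. -/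
noncomputable def aSeq (n : ℕ) : ℝ :=
  ((n : ℝ) - 1) - 4 * (Real.sqrt n - 1) - ((n : ℝ) - 1) ^ 2 / (2 * n)

/-!
It suffices to choose one of two combs with probability `1/2` each: the comb `T₁`, whose teeth are
the rows `{i} × Fin m` hanging off the column `Fin m × {0}`, and its transpose `T₂`. Each is the
tree of a parent map that strictly decreases `i + j`, and two such trees can only share the edges
`s(v, p v)` where the parent maps agree, which for the two combs forces `v` onto the two axes: at
most `2m` edges. For any spanning tree `t`,
`|T₁ \ t| + |T₂ \ t| ≥ |T₁ ∪ T₂| - |t| = (n - 1) - |T₁ ∩ T₂| ≥ n - 1 - 2m`,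
and `(n - 1 - 2m) / 2 ≥ a_n` once `m ≥ 2`.
-/

section SpanningTrees

variable {V : Type*}

lemma edgeSet_fromEdgeSet_of_not_isDiag {s : Set (Sym2 V)} (hs : ∀ e ∈ s, ¬e.IsDiag) :
    (fromEdgeSet s).edgeSet = s := by
  rw [edgeSet_fromEdgeSet]
  exact sdiff_eq_self_iff_disjoint.2 (Set.disjoint_left.2 fun e he hdiag => hs e hdiag he)

lemma isTree_fromEdgeSet_iff [Fintype V] {t : Finset (Sym2 V)} (ht : ∀ e ∈ t, ¬e.IsDiag) :
    (fromEdgeSet (t : Set (Sym2 V))).IsTree ↔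
      (fromEdgeSet (t : Set (Sym2 V))).Connected ∧ #t + 1 = Fintype.card V := by
  rw [isTree_iff_connected_and_card, edgeSet_fromEdgeSet_of_not_isDiag ht, Nat.card_coe_set_eq,
    Set.ncard_coe_finset, Nat.card_eq_fintype_card]

lemma IsST.card_add_one [Fintype V] {G : SimpleGraph V} {t : Finset (Sym2 V)} (ht : IsST G t) :
    #t + 1 = Fintype.card V :=
  ((isTree_fromEdgeSet_iff fun _ he => G.not_isDiag_of_mem_edgeSet (ht.1 he)).1 ht.2).2

lemma Finset.card_add_card_le_card_sdiff_add_card_sdiff [DecidableEq V] (A B t : Finset V) :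
    #A + #B ≤ #(A \ t) + #(B \ t) + #t + #(A ∩ B) := by
  have hunion : #((A ∪ B) \ t) ≤ #(A \ t) + #(B \ t) := by
    rw [union_sdiff_distrib]
    exact card_union_le _ _
  have := card_union_add_card_inter A B
  have := card_le_card_sdiff_add_card (s := A ∪ B) (t := t)
  omega

lemma IsST.card_le_card_sdiff_add_card_sdiff [Fintype V] [DecidableEq V] {G : SimpleGraph V}
    {A B t : Finset (Sym2 V)} (hA : IsST G A) (hB : IsST G B) (ht : IsST G t) :
    Fintype.card V ≤ #(A \ t) + #(B \ t) + #(A ∩ B) + 1 := by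
  have := card_add_card_le_card_sdiff_add_card_sdiff A B t
  have := hA.card_add_one
  have := hB.card_add_one
  have := ht.card_add_one
  omega

end SpanningTrees

section ParentEdges

variable {V : Type*} [Fintype V] [DecidableEq V] {r : V} {p q : V → V} {h : V → ℕ}

def parentEdges (r : V) (p : V → V) : Finset (Sym2 V) :=
  (univ.erase r).image fun v => s(v, p v)

lemma not_isDiag_of_mem_parentEdges (hp : ∀ v ≠ r, h (p v) < h v) {e : Sym2 V}
    (he : e ∈ parentEdges r p) : ¬e.IsDiag := by
  obtain ⟨v, hv, rfl⟩ := mem_image.1 he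
  exact fun hvp => (hp v (ne_of_mem_erase hv)).ne (congrArg h (Sym2.mk_isDiag_iff.1 hvp).symm)

lemma card_parentEdges (hp : ∀ v ≠ r, h (p v) < h v) :
    #(parentEdges r p) + 1 = Fintype.card V := by
  rw [parentEdges, card_image_of_injOn, card_erase_add_one (mem_univ r), card_univ]
  intro v hv w hw hvw
  rcases Sym2.eq_iff.1 hvw with ⟨hvw, -⟩ | ⟨hvw, hwv⟩
  · exact hvw
  · have hv' := hp v (ne_of_mem_erase hv)
    have hw' := hp w (ne_of_mem_erase hw)
    rw [hwv] at hv'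
    rw [← hvw] at hw'
    omega

lemma reachable_root_of_parentEdges (hp : ∀ v ≠ r, h (p v) < h v) (v : V) :
    (fromEdgeSet (parentEdges r p : Set (Sym2 V))).Reachable v r := by
  induction v using (measure h).wf.induction with
  | _ v ih =>
    by_cases hv : v = r
    · rw [hv]
    have hadj : (fromEdgeSet (parentEdges r p : Set (Sym2 V))).Adj v (p v) := by
      rw [fromEdgeSet_adj]
      exact ⟨mem_image_of_mem _ (mem_erase.2 ⟨hv, mem_univ v⟩),
        fun hvp => (hp v hv).ne (congrArg h hvp.symm)⟩
    exact hadj.reachable.trans (ih _ (hp v hv))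

lemma isST_parentEdges {G : SimpleGraph V} (hp : ∀ v ≠ r, h (p v) < h v)
    (hadj : ∀ v ≠ r, G.Adj v (p v)) : IsST G (parentEdges r p) := by
  refine ⟨fun e he => ?_, ?_⟩
  · obtain ⟨v, hv, rfl⟩ := mem_image.1 he
    exact hadj v (ne_of_mem_erase hv)
  have : Nonempty V := ⟨r⟩
  rw [isTree_fromEdgeSet_iff fun _ => not_isDiag_of_mem_parentEdges hp]
  exact ⟨⟨fun v w => (reachable_root_of_parentEdges hp v).trans
    (reachable_root_of_parentEdges hp w).symm⟩, card_parentEdges hp⟩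

lemma card_parentEdges_inter_le (hp : ∀ v ≠ r, h (p v) < h v)
    (hq : ∀ v ≠ r, h (q v) < h v) :
    #(parentEdges r p ∩ parentEdges r q) ≤ #{v ∈ univ.erase r | p v = q v} := by
  refine (card_le_card (t := image (fun v => s(v, p v)) _) fun e he => ?_).trans card_image_le
  obtain ⟨hep, heq⟩ := mem_inter.1 he
  obtain ⟨v, hv, rfl⟩ := mem_image.1 hep
  obtain ⟨w, hw, hwv⟩ := mem_image.1 heq
  rcases Sym2.eq_iff.1 hwv with ⟨rfl, hqp⟩ | ⟨rfl, hqv⟩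
  · exact mem_image_of_mem _ (mem_filter.2 ⟨hv, hqp.symm⟩)
  · have hpv := hp v (ne_of_mem_erase hv)
    have hqpv := hq (p v) (ne_of_mem_erase hw)
    rw [hqv] at hqpv
    omega

end ParentEdges

section Comb

variable {m : ℕ}

def combParent (v : Fin m × Fin m) : Fin m × Fin m :=
  if v.2.1 = 0 then (⟨v.1.1 - 1, by omega⟩, v.2) else (v.1, ⟨v.2.1 - 1, by omega⟩)

lemma val_fst_ne_zero_or_val_snd_ne_zero [NeZero m] {v : Fin m × Fin m} (hv : v ≠ 0) :
    v.1.1 ≠ 0 ∨ v.2.1 ≠ 0 := by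
  contrapose! hv
  exact Prod.ext (Fin.ext hv.1) (Fin.ext hv.2)

lemma combParent_rank_lt [NeZero m] {v : Fin m × Fin m} (hv : v ≠ 0) :
    (combParent v).1.1 + (combParent v).2.1 < v.1.1 + v.2.1 := by
  have := val_fst_ne_zero_or_val_snd_ne_zero hv
  unfold combParent
  split_ifs <;> dsimp only <;> omega

lemma grid_adj_combParent [NeZero m] {v : Fin m × Fin m} (hv : v ≠ 0) :
    (grid m).Adj v (combParent v) := by
  have := val_fst_ne_zero_or_val_snd_ne_zero hv
  unfold combParent grid
  split_ifs
  · exact Or.inr ⟨rfl, Or.inr (by dsimp only; omega)⟩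
  · exact Or.inl ⟨rfl, Or.inr (by dsimp only; omega)⟩

lemma grid_adj_swap {v w : Fin m × Fin m} (h : (grid m).Adj v w) :
    (grid m).Adj v.swap w.swap :=
  Or.symm h

lemma eq_zero_or_eq_zero_of_combParent_eq_swap {v : Fin m × Fin m}
    (h : combParent v = (combParent v.swap).swap) : v.1.1 = 0 ∨ v.2.1 = 0 := by
  by_contra! hv
  have := congrArg (fun w => w.1.1) h
  simp only [combParent, Prod.fst_swap, Prod.snd_swap, hv.1, hv.2, if_false] at this
  omega

lemma swap_combParent_swap_rank_lt [NeZero m] {v : Fin m × Fin m} (hv : v ≠ 0) :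
    (combParent v.swap).swap.1.1 + (combParent v.swap).swap.2.1 < v.1.1 + v.2.1 := by
  have := combParent_rank_lt (Prod.swap_injective.ne hv : v.swap ≠ 0)
  dsimp only [Prod.fst_swap, Prod.snd_swap] at this ⊢
  omega

variable (m) [NeZero m]

noncomputable def comb : Finset (Sym2 (Fin m × Fin m)) :=
  parentEdges 0 combParent

noncomputable def combTranspose : Finset (Sym2 (Fin m × Fin m)) :=
  parentEdges 0 fun v => (combParent v.swap).swap

lemma comb_isST : IsST (grid m) (comb m) :=
  isST_parentEdges (h := fun v => v.1.1 + v.2.1) (fun _ => combParent_rank_lt)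
    fun _ => grid_adj_combParent

lemma combTranspose_isST : IsST (grid m) (combTranspose m) :=
  isST_parentEdges (h := fun v => v.1.1 + v.2.1) (fun _ => swap_combParent_swap_rank_lt)
    fun _ hv => grid_adj_swap (grid_adj_combParent (Prod.swap_injective.ne hv))

lemma card_comb_inter_combTranspose_le : #(comb m ∩ combTranspose m) ≤ 2 * m := by
  have haxes : {v ∈ univ.erase (0 : Fin m × Fin m) | combParent v = (combParent v.swap).swap} ⊆
      univ.image (fun j => ((0 : Fin m), j)) ∪ univ.image (fun i => (i, (0 : Fin m))) := by
    intro v hv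
    rcases eq_zero_or_eq_zero_of_combParent_eq_swap (mem_filter.1 hv).2 with h | h
    · exact mem_union_left _ (mem_image.2 ⟨v.2, mem_univ _, Prod.ext (Fin.ext h.symm) rfl⟩)
    · exact mem_union_right _ (mem_image.2 ⟨v.1, mem_univ _, Prod.ext rfl (Fin.ext h.symm)⟩)
  calc #(comb m ∩ combTranspose m)
      ≤ #{v ∈ univ.erase 0 | combParent v = (combParent v.swap).swap} :=
        card_parentEdges_inter_le (h := fun v => v.1.1 + v.2.1) (fun _ => combParent_rank_lt)
          fun _ => swap_combParent_swap_rank_lt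
    _ ≤ #(univ.image (fun j => ((0 : Fin m), j))) + #(univ.image (fun i => (i, (0 : Fin m)))) :=
        (card_le_card haxes).trans (card_union_le _ _)
    _ ≤ m + m := by
        gcongr <;> exact card_image_le.trans (card_fin m).le
    _ = 2 * m := (two_mul m).symm

end Comb

section Mixture

variable {α : Type*} [DecidableEq α]

noncomputable def evenMix (a b : α) (x : α) : ℝ :=
  ((if x = a then 1 else 0) + (if x = b then 1 else 0)) / 2

lemma evenMix_nonneg (a b x : α) : 0 ≤ evenMix a b x := by
  unfold evenMix
  split_ifs <;> norm_num

lemma eq_or_eq_of_evenMix_ne_zero {a b x : α} (hx : evenMix a b x ≠ 0) : x = a ∨ x = b := by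
  by_contra! h
  simp [evenMix, h.1, h.2] at hx

lemma sum_evenMix_mul [Fintype α] (a b : α) (f : α → ℝ) :
    ∑ x, evenMix a b x * f x = (f a + f b) / 2 := by
  simp only [evenMix, div_mul_eq_mul_div, add_mul, ite_mul, one_mul, zero_mul, ← sum_div,
    sum_add_distrib, sum_ite_eq', mem_univ, if_true]

lemma sum_evenMix [Fintype α] (a b : α) : ∑ x, evenMix a b x = 1 := by
  simpa using sum_evenMix_mul a b 1

end Mixture

lemma exists_ne_zero_le_of_le_sum_mul {α : Type*} [Fintype α] {P f : α → ℝ} {c : ℝ}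
    (hP : ∀ x, 0 ≤ P x) (hP1 : ∑ x, P x = 1) (hc : c ≤ ∑ x, P x * f x) :
    ∃ x, P x ≠ 0 ∧ c ≤ f x := by
  classical
  have hsupp : ∑ x ∈ univ.filter (P · ≠ 0), P x = 1 := by rw [sum_filter_ne_zero, hP1]
  obtain ⟨x, hx, hle⟩ := exists_le_of_sum_le (f := fun x => P x * c) (g := fun x => P x * f x)
    (nonempty_of_sum_ne_zero (hsupp ▸ one_ne_zero))
    (by
      rw [← sum_mul, hsupp, one_mul, sum_filter_of_ne fun x _ h => left_ne_zero_of_mul h]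
      exact hc)
  have hPx := (mem_filter.1 hx).2
  exact ⟨x, hPx, le_of_mul_le_mul_left hle ((hP x).lt_of_ne' hPx)⟩

lemma aSeq_sq_le {m : ℕ} (hm : 2 ≤ m) : aSeq (m ^ 2) ≤ ((m : ℝ) ^ 2 - 2 * m - 1) / 2 := by
  have hm' : (2 : ℝ) ≤ m := by exact_mod_cast hm
  rw [aSeq, Nat.cast_pow, Real.sqrt_sq (by positivity), sub_le_iff_le_add, ← sub_le_iff_le_add',
    le_div_iff₀ (by positivity)]
  nlinarith

lemma tendsto_aSeq_div_atTop :
    Filter.Tendsto (fun n : ℕ => aSeq n / n) Filter.atTop (nhds (1 / 2)) := by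
  have hinv : Filter.Tendsto (fun n : ℕ => (n : ℝ)⁻¹) Filter.atTop (nhds 0) :=
    tendsto_inv_atTop_zero.comp tendsto_natCast_atTop_atTop
  have hinvSqrt : Filter.Tendsto (fun n : ℕ => (Real.sqrt n)⁻¹) Filter.atTop (nhds 0) :=
    tendsto_inv_atTop_zero.comp (Real.tendsto_sqrt_atTop.comp tendsto_natCast_atTop_atTop)
  have hone := (tendsto_const_nhds (x := (1 : ℝ))).sub hinv
  have hlim := (hone.sub ((hinvSqrt.sub hinv).const_mul 4)).sub ((hone.pow 2).div_const 2)
  norm_num at hlim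
  refine hlim.congr' ?_
  filter_upwards [Filter.eventually_gt_atTop 0] with n hn
  have hn' : (0 : ℝ) < n := by exact_mod_cast hn
  have hsqrt : Real.sqrt n * Real.sqrt n = n := Real.mul_self_sqrt hn'.le
  have hsqrt0 : 0 < Real.sqrt n := Real.sqrt_pos.2 hn'
  rw [aSeq]
  field_simp
  nlinarith

lemma aSeq_le_card_sdiff_comb {m : ℕ} [NeZero m] (hm : 2 ≤ m)
    {t : Finset (Sym2 (Fin m × Fin m))} (ht : IsST (grid m) t) :
    aSeq (m ^ 2) ≤ ((#(comb m \ t) : ℝ) + #(combTranspose m \ t)) / 2 := by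
  have hcount := (comb_isST m).card_le_card_sdiff_add_card_sdiff (combTranspose_isST m) ht
  rw [Fintype.card_prod, Fintype.card_fin] at hcount
  have hinter := card_comb_inter_combTranspose_le m
  have hcount' : (m : ℝ) ^ 2 ≤ #(comb m \ t) + #(combTranspose m \ t) + 2 * m + 1 := by
    rw [sq]
    exact_mod_cast hcount.trans (by omega)
  linarith [aSeq_sq_le hm]

/-- There is a random spanning tree `𝒯` of the grid `C_m²` such that for every spanning
tree `t`, `E|𝒯 \ t| ≥ a_n` with `n = m²`; consequently for every spanning tree `t` there
is a spanning tree `t*` with `|t* \ t| ≥ a_n`; moreover `a_n/n → 1/2`. -/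
theorem grid_far_spanning_tree (m : ℕ) (hm : 2 ≤ m) :
    (∃ P : Finset (Sym2 (Fin m × Fin m)) → ℝ,
      (∀ T, 0 ≤ P T) ∧ (∑ T : Finset (Sym2 (Fin m × Fin m)), P T = 1) ∧
      (∀ T, P T ≠ 0 → IsST (grid m) T) ∧
      (∀ t, IsST (grid m) t →
        aSeq (m ^ 2) ≤ ∑ T : Finset (Sym2 (Fin m × Fin m)), P T * ((T \ t).card : ℝ))) ∧
    (∀ t, IsST (grid m) t →
      ∃ tstar, IsST (grid m) tstar ∧ aSeq (m ^ 2) ≤ ((tstar \ t).card : ℝ)) ∧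
    Filter.Tendsto (fun n : ℕ => aSeq n / n) Filter.atTop (nhds (1 / 2)) := by
  have : NeZero m := ⟨by omega⟩
  set P := evenMix (comb m) (combTranspose m)
  have hP : ∀ T, P T ≠ 0 → IsST (grid m) T := fun T hT => by
    rcases eq_or_eq_of_evenMix_ne_zero hT with rfl | rfl
    exacts [comb_isST m, combTranspose_isST m]
  have hfar : ∀ t, IsST (grid m) t → aSeq (m ^ 2) ≤ ∑ T, P T * ((T \ t).card : ℝ) :=
    fun t ht => by
      rw [sum_evenMix_mul]
      exact aSeq_le_card_sdiff_comb hm ht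
  refine ⟨⟨P, evenMix_nonneg _ _, sum_evenMix _ _, hP, hfar⟩, fun t ht => ?_,
    tendsto_aSeq_div_atTop⟩
  obtain ⟨T, hT, hTfar⟩ :=
    exists_ne_zero_le_of_le_sum_mul (evenMix_nonneg _ _) (sum_evenMix _ _) (hfar t ht)
  exact ⟨T, hP T hT, hTfar⟩
end

section
/- Let c₁ be a constant such that any n points in the square of area n have MST of length at most c₁ n. Then for sufficiently large n, for any configuration of n points in [0, n^{1/2}]² with distinct interpoint distances and MST T_n, there exists a spanning tree T'' on the same points with len(T'') ≤ 12 c₁ n and |T'' \ T_n| ≥ n/2. -/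
open SimpleGraph Finset

/-- The Euclidean edge-length function induced by a point configuration. -/
noncomputable def eucLen {n d : ℕ} (x : Fin n → EuclideanSpace ℝ (Fin d)) :
    Sym2 (Fin n) → ℝ :=
  Sym2.lift ⟨fun i j => dist (x i) (x j), fun _ _ => dist_comm _ _⟩
/-!
The far tree is not built from `T_n` at all but from a short Hamiltonian path. Listing the points
strip by strip (horizontal strips of height `2`), each strip from left to right, gives a path of
length `L ≤ 3.5 n + √n`. Joining every vertex of the path to the vertex `k` steps back, for
`k = 1, 2, 3`, plus a few long edges connecting the residue classes mod `k`, gives three pairwise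
edge-disjoint spanning trees, of lengths at most `3 L + 4 √n`. One of them shares at most
`(n - 1) / 3` edges with `T_n`, so it has at least `2 (n - 1) / 3 ≥ n / 2` edges outside `T_n`.
Finally, applying the hypothesis on `c₁` to a grid of unit spacing gives `c₁ n ≥ n - 1`, which
absorbs `3 L + 4 √n ≤ 10.5 n + 7 √n` for large `n`.
-/

section SpanningTree

variable {V : Type*} {T : Finset (Sym2 V)}

lemma edgeSet_fromEdgeSet_of_subset (hT : ↑T ⊆ (⊤ : SimpleGraph V).edgeSet) :
    (fromEdgeSet (↑T : Set (Sym2 V))).edgeSet = ↑T := by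
  rw [edgeSet_fromEdgeSet, sdiff_eq_left]
  exact Set.disjoint_left.2 fun _ he => by simpa using hT he

lemma natCard_edgeSet_fromEdgeSet_of_subset (hT : ↑T ⊆ (⊤ : SimpleGraph V).edgeSet) :
    Nat.card (fromEdgeSet (↑T : Set (Sym2 V))).edgeSet = #T := by
  rw [edgeSet_fromEdgeSet_of_subset hT, Nat.card_coe_set_eq, Set.ncard_coe_finset]

variable [Fintype V]

lemma IsST.card_add_one_s13 (h : IsST (⊤ : SimpleGraph V) T) : #T + 1 = Fintype.card V := by
  have := (isTree_iff_connected_and_card.1 h.2).2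
  rwa [natCard_edgeSet_fromEdgeSet_of_subset h.1, Nat.card_eq_fintype_card] at this

lemma isST_of_connected (hT : ↑T ⊆ (⊤ : SimpleGraph V).edgeSet)
    (hconn : (fromEdgeSet (↑T : Set (Sym2 V))).Connected) (hcard : #T + 1 ≤ Fintype.card V) :
    IsST ⊤ T := by
  have hvert := hconn.card_vert_le_card_edgeSet_add_one
  rw [natCard_edgeSet_fromEdgeSet_of_subset hT, Nat.card_eq_fintype_card] at hvert
  refine ⟨hT, isTree_iff_connected_and_card.2 ⟨hconn, ?_⟩⟩
  rw [natCard_edgeSet_fromEdgeSet_of_subset hT, Nat.card_eq_fintype_card]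
  omega

lemma isST_image_parent [DecidableEq V] (r : V) (p : V → V) (rank : V → ℕ)
    (hrank : ∀ v ≠ r, rank (p v) < rank v) :
    IsST ⊤ ((univ.erase r).image fun v => s(v, p v)) := by
  have hp : ∀ v ≠ r, p v ≠ v := fun v hv h => (hrank v hv).ne (congrArg rank h)
  refine isST_of_connected ?_ ?_ ?_
  · simp only [Finset.coe_image, Set.image_subset_iff]
    intro v hv
    simpa [eq_comm] using hp v (Finset.mem_erase.1 hv).1
  · refine (connected_iff_exists_forall_reachable _).2 ⟨r, fun v => ?_⟩
    induction hv : rank v using Nat.strong_induction_on generalizing v with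
    | _ m ih =>
      by_cases hvr : v = r
      · exact hvr ▸ Reachable.refl _
      have hadj : (fromEdgeSet (↑((univ.erase r).image fun v => s(v, p v)) : Set (Sym2 V))).Adj
          (p v) v := by
        rw [fromEdgeSet_adj]
        exact ⟨by simpa using ⟨v, hvr, by simp⟩, hp v hvr⟩
      exact (ih _ (hv ▸ hrank v hvr) (p v) rfl).trans hadj.reachable
  · calc #((univ.erase r).image fun v => s(v, p v)) + 1 ≤ #(univ.erase r) + 1 :=
          Nat.add_le_add_right card_image_le 1
      _ = Fintype.card V := by rw [card_erase_add_one (mem_univ r), card_univ]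

end SpanningTree

section PathIndex

/-- The vertices `1, …, k - 1`, which have no vertex `k` steps back, hang off vertex `6 (k - 1)`:
for `k ≤ 3` it lies in the residue class of the root mod `k`, and it is far enough out that the
trees `k = 1, 2, 3` share no edge. -/
def pathParent (k j : ℕ) : ℕ := if k ≤ j then j - k else 6 * (k - 1)

def pathRank (k j : ℕ) : ℕ := if k ∣ j then j else j + 6 * k

variable {k l i j : ℕ}

lemma pathRank_pathParent_lt (hk : k ∈ Icc 1 3) (hj : 1 ≤ j) :
    pathRank k (pathParent k j) < pathRank k j := by
  obtain ⟨hk1, hk3⟩ := Finset.mem_Icc.1 hk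
  interval_cases k <;> simp only [pathRank, pathParent] <;> split_ifs <;> omega

lemma pathParent_lt {n : ℕ} (hk : 6 * (k - 1) < n) (hj : j < n) : pathParent k j < n := by
  unfold pathParent; split_ifs <;> omega

lemma mk_pathParent_ne_mk_pathParent (hk : k ∈ Icc 1 3) (hl : l ∈ Icc 1 3) (hkl : k ≠ l)
    (hi : 1 ≤ i) (hj : 1 ≤ j) : s(i, pathParent k i) ≠ s(j, pathParent l j) := by
  obtain ⟨hk1, hk3⟩ := Finset.mem_Icc.1 hk
  obtain ⟨hl1, hl3⟩ := Finset.mem_Icc.1 hl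
  rw [Ne, Sym2.eq_iff]
  interval_cases k <;> interval_cases l <;> simp only [pathParent] <;> split_ifs <;> omega

end PathIndex

section PathLength

variable {α : Type*} [PseudoMetricSpace α] (y : ℕ → α)

lemma sum_dist_sub_le (k m : ℕ) :
    ∑ j ∈ Ico k m, dist (y (j - k)) (y j) ≤ k * ∑ t ∈ range (m - 1), dist (y t) (y (t + 1)) := by
  set d : ℕ → ℝ := fun t => dist (y t) (y (t + 1))
  calc ∑ j ∈ Ico k m, dist (y (j - k)) (y j)
      ≤ ∑ j ∈ Ico k m, ∑ i ∈ range k, d (j - k + i) := by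
        refine sum_le_sum fun j hj => ?_
        have := dist_le_Ico_sum_dist y (Nat.sub_le j k)
        rwa [sum_Ico_eq_sum_range, Nat.sub_sub_self (Finset.mem_Ico.1 hj).1] at this
    _ = ∑ i ∈ range k, ∑ j ∈ Ico k m, d (j - k + i) := sum_comm
    _ ≤ ∑ _i ∈ range k, ∑ t ∈ range (m - 1), d t := by
        refine sum_le_sum fun i hi => ?_
        rw [sum_Ico_eq_sum_range]
        simp only [Nat.add_sub_cancel_left]
        calc ∑ s ∈ range (m - k), d (s + i)
            = ∑ t ∈ (range (m - k)).map (addRightEmbedding i), d t := by rw [sum_map]; rfl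
          _ ≤ ∑ t ∈ range (m - 1), d t := by
            refine sum_le_sum_of_subset_of_nonneg (fun t ht => ?_) fun _ _ _ => dist_nonneg
            simp only [Finset.mem_map, Finset.mem_range, addRightEmbedding_apply] at ht hi ⊢
            omega
    _ = k * ∑ t ∈ range (m - 1), d t := by rw [sum_const, card_range, nsmul_eq_mul]

lemma sum_dist_pathParent_le {D : ℝ} (hD : ∀ s t, dist (y s) (y t) ≤ D) {k n : ℕ} (hk : 1 ≤ k)
    (hkn : k ≤ n) :
    ∑ j ∈ Ico 1 n, dist (y j) (y (pathParent k j))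
      ≤ k * ∑ t ∈ range (n - 1), dist (y t) (y (t + 1)) + (k - 1) * D := by
  rw [← sum_Ico_consecutive _ hk hkn, add_comm ((k : ℝ) * _)]
  gcongr
  · calc ∑ j ∈ Ico 1 k, dist (y j) (y (pathParent k j)) ≤ #(Ico 1 k) • D :=
          sum_le_card_nsmul _ _ _ fun j _ => hD _ _
      _ = (k - 1) * D := by rw [Nat.card_Ico, nsmul_eq_mul, Nat.cast_sub hk, Nat.cast_one]
  · calc ∑ j ∈ Ico k n, dist (y j) (y (pathParent k j))
          = ∑ j ∈ Ico k n, dist (y (j - k)) (y j) := sum_congr rfl fun j hj => by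
            rw [pathParent, if_pos (Finset.mem_Ico.1 hj).1, _root_.dist_comm]
      _ ≤ _ := sum_dist_sub_le y k n

end PathLength

lemma eucLen_nonneg {n d : ℕ} (x : Fin n → EuclideanSpace ℝ (Fin d)) (e : Sym2 (Fin n)) :
    0 ≤ eucLen x e :=
  Sym2.ind (fun _ _ => dist_nonneg (x := x _)) e

section Tour

variable {V : Type*} {n : ℕ} [NeZero n] (e : Fin n ≃ V)

/-- Clamped at the last vertex, so that the path is indexed by all of `ℕ`. -/
def tourVertex (t : ℕ) : V :=
  e ⟨min t (n - 1), (min_le_right _ _).trans_lt (Nat.sub_one_lt (NeZero.ne n))⟩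

lemma tourVertex_of_lt {t : ℕ} (ht : t < n) : tourVertex e t = e ⟨t, ht⟩ := by
  simp only [tourVertex, Fin.mk.injEq, EmbeddingLike.apply_eq_iff_eq]
  omega

lemma tourVertex_zero : tourVertex e 0 = e 0 := tourVertex_of_lt e _

lemma tourVertex_injOn : Set.InjOn (tourVertex e) (Set.Iio n) := by
  intro s hs t ht hst
  rw [tourVertex_of_lt e hs, tourVertex_of_lt e ht] at hst
  simpa using Fin.mk.inj_iff.1 (e.injective hst)

lemma val_symm_ne_zero {v : V} (hv : v ≠ e 0) : (e.symm v : ℕ) ≠ 0 :=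
  Fin.val_ne_zero_iff.2 (e.symm_apply_eq.not.2 hv)

def tourLength {α : Type*} [PseudoMetricSpace α] (x : V → α) : ℝ :=
  ∑ t ∈ range (n - 1), dist (x (tourVertex e t)) (x (tourVertex e (t + 1)))

variable [DecidableEq V]

def tourTree (k : ℕ) : Finset (Sym2 V) :=
  (Ico 1 n).image fun j => s(tourVertex e j, tourVertex e (pathParent k j))

lemma pairwiseDisjoint_tourTree (hn : 12 < n) :
    (Icc 1 3 : Set ℕ).PairwiseDisjoint (tourTree e) := by
  intro k hk l hl hkl
  rw [Finset.mem_coe] at hk hl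
  rw [Function.onFun, Finset.disjoint_left]
  simp only [tourTree, Finset.mem_image, Finset.mem_Ico, not_exists, not_and]
  rintro _ ⟨i, ⟨hi1, hin⟩, rfl⟩ j ⟨hj1, hjn⟩ hij
  have hlt : ∀ {m t}, m ∈ Icc 1 3 → t < n → pathParent m t ∈ Set.Iio n :=
    fun hm ht => pathParent_lt (by rw [Finset.mem_Icc] at hm; omega) ht
  have inj := tourVertex_injOn e
  refine mk_pathParent_ne_mk_pathParent hk hl hkl hi1 hj1 (Sym2.eq_iff.2 ?_)
  rcases Sym2.eq_iff.1 hij with ⟨h1, h2⟩ | ⟨h1, h2⟩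
  · exact .inl ⟨(inj hjn hin h1).symm, (inj (hlt hl hjn) (hlt hk hin) h2).symm⟩
  · exact .inr ⟨(inj (hlt hl hjn) hin h2).symm, (inj hjn (hlt hk hin) h1).symm⟩

variable [Fintype V]

lemma image_tourVertex_Ico : (Ico 1 n).image (tourVertex e) = univ.erase (e 0) := by
  ext v
  simp only [Finset.mem_image, Finset.mem_Ico, Finset.mem_erase, Finset.mem_univ, and_true]
  constructor
  · rintro ⟨t, ⟨ht1, htn⟩, rfl⟩ h
    rw [← tourVertex_zero] at h
    have := tourVertex_injOn e (Set.mem_Iio.2 htn) (Set.mem_Iio.2 (Nat.pos_of_neZero n)) h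
    omega
  · intro hv
    refine ⟨e.symm v, ⟨Nat.one_le_iff_ne_zero.2 (val_symm_ne_zero e hv), (e.symm v).2⟩, ?_⟩
    rw [tourVertex_of_lt e (e.symm v).2]
    simp

lemma isST_tourTree {k : ℕ} (hk : k ∈ Icc 1 3) (hn : 6 * (k - 1) < n) :
    IsST ⊤ (tourTree e k) := by
  have key := isST_image_parent (e 0)
    (fun v => tourVertex e (pathParent k (e.symm v))) (fun v => pathRank k (e.symm v)) ?_
  · rwa [← image_tourVertex_Ico, Finset.image_image, Finset.image_congr (g := fun j =>
      s(tourVertex e j, tourVertex e (pathParent k j)))] at key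
    intro j hj
    simp only [Function.comp_apply, tourVertex_of_lt e (Finset.mem_Ico.1 hj).2,
      Equiv.symm_apply_apply]
  · intro v hv
    rw [tourVertex_of_lt e (pathParent_lt hn (e.symm v).2), Equiv.symm_apply_apply]
    exact pathRank_pathParent_lt hk (Nat.one_le_iff_ne_zero.2 (val_symm_ne_zero e hv))

end Tour

lemma lenSum_tourTree_le {n d : ℕ} [NeZero n] (x : Fin n → EuclideanSpace ℝ (Fin d))
    (e : Fin n ≃ Fin n) {D : ℝ} (hD : ∀ i j, dist (x i) (x j) ≤ D) {k : ℕ} (hk : 1 ≤ k)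
    (hkn : k ≤ n) : lenSum (eucLen x) (tourTree e k) ≤ k * tourLength e x + (k - 1) * D :=
  (sum_image_le_of_nonneg fun _ _ => (eucLen_nonneg x _)).trans
    (sum_dist_pathParent_le (x ∘ tourVertex e) (fun _ _ => hD _ _) hk hkn)

section Square

lemma dist_le_abs_add_abs (p q : EuclideanSpace ℝ (Fin 2)) :
    dist p q ≤ |p 0 - q 0| + |p 1 - q 1| := by
  rw [EuclideanSpace.dist_eq, Fin.sum_univ_two, Real.dist_eq, Real.dist_eq, sq_abs, sq_abs]
  refine Real.sqrt_le_iff.2 ⟨by positivity, ?_⟩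
  nlinarith [abs_nonneg (p 0 - q 0), abs_nonneg (p 1 - q 1), sq_abs (p 0 - q 0),
    sq_abs (p 1 - q 1)]

variable {A : ℝ} {p q : EuclideanSpace ℝ (Fin 2)}

lemma dist_le_of_mem_square (hp : ∀ k, p k ∈ Set.Icc 0 A) (hq : ∀ k, q k ∈ Set.Icc 0 A) :
    dist p q ≤ 2 * A := by
  have h0 := abs_sub_le_of_nonneg_of_le (hp 0).1 (hp 0).2 (hq 0).1 (hq 0).2
  have h1 := abs_sub_le_of_nonneg_of_le (hp 1).1 (hp 1).2 (hq 1).1 (hq 1).2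
  linarith [dist_le_abs_add_abs p q]

noncomputable def stripKey (p : EuclideanSpace ℝ (Fin 2)) : ℤ ×ₗ ℝ := toLex (⌊p 1 / 2⌋, p 0)

/-- A step inside a strip costs at most its horizontal advance plus the strip height; a step up to
a higher strip costs at most the diameter `2 A`, which the jump in strip index pays for. -/
lemma dist_le_of_stripKey_le (hp : ∀ k, p k ∈ Set.Icc 0 A) (hq : ∀ k, q k ∈ Set.Icc 0 A)
    (hpq : stripKey p ≤ stripKey q) :
    dist p q ≤ (q 0 - p 0) + 2 + (⌊q 1 / 2⌋ - ⌊p 1 / 2⌋ : ℤ) * (3 * A) := by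
  rcases Prod.Lex.le_iff.1 hpq with hlt | ⟨heq, hle⟩
  · have hstrip : (1 : ℝ) ≤ ((⌊q 1 / 2⌋ - ⌊p 1 / 2⌋ : ℤ) : ℝ) := by
      exact_mod_cast Int.sub_pos_of_lt hlt
    have hA : 0 ≤ A := (hp 0).1.trans (hp 0).2
    nlinarith [dist_le_of_mem_square hp hq, (hp 0).2, (hq 0).1]
  · simp only [stripKey, ofLex_toLex] at heq hle
    have hfloor : (⌊p 1 / 2⌋ : ℝ) = ⌊q 1 / 2⌋ := by exact_mod_cast heq
    have hy : |p 1 - q 1| ≤ 2 := by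
      rw [abs_le]
      constructor <;> linarith [Int.floor_le (p 1 / 2), Int.lt_floor_add_one (p 1 / 2),
        Int.floor_le (q 1 / 2), Int.lt_floor_add_one (q 1 / 2)]
    rw [heq, sub_self, Int.cast_zero, zero_mul, add_zero]
    linarith [dist_le_abs_add_abs p q, abs_sub_comm (p 0) (q 0), abs_of_nonneg (sub_nonneg.2 hle)]

end Square

lemma exists_tourLength_le {n : ℕ} [NeZero n] (x : Fin n → EuclideanSpace ℝ (Fin 2)) {A : ℝ}
    (hx : ∀ i k, x i k ∈ Set.Icc 0 A) :
    ∃ e : Equiv.Perm (Fin n), tourLength e x ≤ A + 2 * n + 3 / 2 * A ^ 2 := by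
  set e := Tuple.sort (stripKey ∘ x)
  set y : ℕ → EuclideanSpace ℝ (Fin 2) := fun t => x (tourVertex e t)
  have hy : ∀ t k, y t k ∈ Set.Icc 0 A := fun t => hx _
  have hmono (t : ℕ) : stripKey (y t) ≤ stripKey (y (t + 1)) :=
    Tuple.monotone_sort (stripKey ∘ x) (Fin.mk_le_mk.2 (by omega))
  set s : ℕ → ℝ := fun t => (⌊y t 1 / 2⌋ : ℝ)
  have hA : 0 ≤ A := (hx 0 0).1.trans (hx 0 0).2
  have hs0 : 0 ≤ s 0 := Int.cast_nonneg (Int.floor_nonneg.2 (by linarith [(hy 0 1).1]))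
  have hsn : s (n - 1) ≤ A / 2 := (Int.floor_le _).trans (by linarith [(hy (n - 1) 1).2])
  refine ⟨e, ?_⟩
  calc tourLength e x
      ≤ ∑ t ∈ range (n - 1), ((y (t + 1) 0 - y t 0) + 2 + (s (t + 1) - s t) * (3 * A)) :=
        sum_le_sum fun t _ => by
          simpa [s] using dist_le_of_stripKey_le (hy t) (hy (t + 1)) (hmono t)
    _ = (y (n - 1) 0 - y 0 0) + 2 * (n - 1 : ℕ) + (s (n - 1) - s 0) * (3 * A) := by
        rw [sum_add_distrib, sum_add_distrib, sum_range_sub (fun t => y t 0), ← sum_mul,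
          sum_range_sub s, sum_const, card_range, nsmul_eq_mul]
        ring
    _ ≤ A + 2 * n + 3 / 2 * A ^ 2 := by
        have hn : ((n - 1 : ℕ) : ℝ) ≤ n := by exact_mod_cast Nat.sub_le n 1
        nlinarith [(hy (n - 1) 0).2, (hy 0 0).1]

lemma exists_min_lenSum_isST {V : Type*} [Fintype V] [DecidableEq V] {G : SimpleGraph V}
    (len : Sym2 V → ℝ) (hG : ∃ T, IsST G T) :
    ∃ T, IsST G T ∧ ∀ T', IsST G T' → lenSum len T ≤ lenSum len T' := by
  classical
  obtain ⟨T₀, hT₀⟩ := hG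
  obtain ⟨T, hT, hmin⟩ := exists_min_image {T | IsST G T} (lenSum len) ⟨T₀, by simpa using hT₀⟩
  exact ⟨T, (Finset.mem_filter.1 hT).2, fun T' hT' => hmin T' (by simpa using hT')⟩

lemma card_sub_one_le_lenSum {V : Type*} [Fintype V] {len : Sym2 V → ℝ}
    (hlen : ∀ e ∈ (⊤ : SimpleGraph V).edgeSet, 1 ≤ len e) {T : Finset (Sym2 V)}
    (hT : IsST ⊤ T) : (Fintype.card V : ℝ) - 1 ≤ lenSum len T := by
  have hsum := card_nsmul_le_sum T len 1 fun e he => hlen e (hT.1 he)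
  rw [nsmul_eq_mul, mul_one] at hsum
  rw [← hT.card_add_one_s13, Nat.cast_add, Nat.cast_one, add_sub_cancel_right]
  exact hsum

def gridPoint (m i : ℕ) : EuclideanSpace ℝ (Fin 2) := !₂[(i % m : ℕ), (i / m : ℕ)]

lemma one_le_dist_gridPoint {m i j : ℕ} (hij : i ≠ j) :
    1 ≤ dist (gridPoint m i) (gridPoint m j) := by
  by_cases hmod : i % m = j % m
  · have hdiv : i / m ≠ j / m := fun h => hij <| by
      rw [← Nat.div_add_mod i m, ← Nat.div_add_mod j m, h, hmod]
    refine le_trans ?_ (PiLp.dist_apply_le _ _ 1)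
    simpa [gridPoint, Nat.dist_cast_real] using Nat.pairwise_one_le_dist hdiv
  · refine le_trans ?_ (PiLp.dist_apply_le _ _ 0)
    simpa [gridPoint, Nat.dist_cast_real] using Nat.pairwise_one_le_dist hmod

lemma gridPoint_mem_square {n i : ℕ} (hi : i < n) (k : Fin 2) :
    gridPoint (Nat.sqrt n + 1) i k ∈ Set.Icc 0 (Real.sqrt n) := by
  have hcoord : ∀ c : ℕ, c ≤ Nat.sqrt n → (c : ℝ) ∈ Set.Icc 0 (Real.sqrt n) := fun c hc =>
    ⟨c.cast_nonneg, (Nat.cast_le.2 hc).trans Real.nat_sqrt_le_real_sqrt⟩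
  fin_cases k
  · exact hcoord _ (Nat.lt_succ_iff.1 (Nat.mod_lt _ (Nat.succ_pos _)))
  · refine hcoord _ (Nat.lt_succ_iff.1 (Nat.div_lt_of_lt_mul ?_))
    exact hi.trans_le (Nat.lt_succ_sqrt n).le

lemma sub_one_le_of_mst_bound {c : ℝ} {n : ℕ} [NeZero n]
    (hbound : ∀ x : Fin n → EuclideanSpace ℝ (Fin 2),
      (∀ i : Fin n, ∀ k : Fin 2, x i k ∈ Set.Icc (0 : ℝ) (Real.sqrt n)) →
      ∀ T : Finset (Sym2 (Fin n)), IsST (⊤ : SimpleGraph (Fin n)) T →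
        (∀ T', IsST (⊤ : SimpleGraph (Fin n)) T' →
          lenSum (eucLen x) T ≤ lenSum (eucLen x) T') →
        lenSum (eucLen x) T ≤ c * n) :
    (n : ℝ) - 1 ≤ c * n := by
  set x : Fin n → EuclideanSpace ℝ (Fin 2) := fun i => gridPoint (Nat.sqrt n + 1) i
  obtain ⟨T, hT, hmin⟩ := exists_min_lenSum_isST (eucLen x)
    ⟨_, isST_tourTree (Equiv.refl _) (k := 1) (by simp) (by simp [Nat.pos_of_neZero])⟩
  have hsep : ∀ e ∈ (⊤ : SimpleGraph (Fin n)).edgeSet, 1 ≤ eucLen x e := by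
    intro e
    induction e using Sym2.ind with
    | _ i j => exact fun hij => one_le_dist_gridPoint (Fin.val_injective.ne (by simpa using hij))
  calc (n : ℝ) - 1 = (Fintype.card (Fin n) : ℝ) - 1 := by rw [Fintype.card_fin]
    _ ≤ lenSum (eucLen x) T := card_sub_one_le_lenSum hsep hT
    _ ≤ c * n := hbound x (fun i => gridPoint_mem_square i.2) T hT hmin

lemma exists_card_mul_card_inter_le {ι α : Type*} [DecidableEq α] {s : Finset ι}
    (hs : s.Nonempty) {E : ι → Finset α} (hE : (s : Set ι).PairwiseDisjoint E) (T : Finset α) :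
    ∃ i ∈ s, #s * #(E i ∩ T) ≤ #T := by
  refine exists_le_of_sum_le hs ?_
  rw [← mul_sum, ← card_biUnion (hE.mono fun i => inter_subset_left), sum_const, smul_eq_mul]
  exact Nat.mul_le_mul_left _ (card_le_card (biUnion_subset.2 fun i _ => inter_subset_right))

lemma lenSum_tourTree_le_of_mem_square {n : ℕ} [NeZero n] (hn : 100 ≤ n)
    {x : Fin n → EuclideanSpace ℝ (Fin 2)} (hx : ∀ i k, x i k ∈ Set.Icc 0 (Real.sqrt n))
    {e : Equiv.Perm (Fin n)} (he : tourLength e x ≤ Real.sqrt n + 2 * n + 3 / 2 * Real.sqrt n ^ 2)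
    {k : ℕ} (hk : k ∈ Icc 1 3) : lenSum (eucLen x) (tourTree e k) ≤ 12 * (n - 1) := by
  obtain ⟨hk1, hk3⟩ := Finset.mem_Icc.1 hk
  have hsqrt : 10 ≤ Real.sqrt n := Real.le_sqrt_of_sq_le (by norm_num; exact_mod_cast hn)
  have hsq : Real.sqrt n ^ 2 = n := Real.sq_sqrt n.cast_nonneg
  calc lenSum (eucLen x) (tourTree e k)
      ≤ k * tourLength e x + (k - 1) * (2 * Real.sqrt n) :=
        lenSum_tourTree_le x e (fun i j => dist_le_of_mem_square (hx i) (hx j)) hk1 (by omega)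
    _ ≤ 3 * (Real.sqrt n + 2 * n + 3 / 2 * Real.sqrt n ^ 2) + 2 * (2 * Real.sqrt n) := by
        have hk3' : (k : ℝ) ≤ 3 := by exact_mod_cast hk3
        gcongr
        · exact sum_nonneg fun _ _ => dist_nonneg
        · linarith
    _ ≤ 12 * (n - 1) := by nlinarith

lemma half_card_le_card_sdiff {V : Type*} [Fintype V] [DecidableEq V] {E T : Finset (Sym2 V)}
    (hE : IsST ⊤ E) (hT : IsST ⊤ T) (hV : 4 ≤ Fintype.card V) (hET : 3 * #(E ∩ T) ≤ #T) :
    (Fintype.card V : ℝ) / 2 ≤ #(E \ T) := by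
  have hcard := card_inter_add_card_sdiff E T
  have hE' := hE.card_add_one_s13
  have hT' := hT.card_add_one_s13
  have : (Fintype.card V : ℝ) ≤ 2 * #(E \ T) := by exact_mod_cast (by omega : _ ≤ 2 * _)
  linarith

theorem far_spanning_tree_exists_general (c₁ : ℝ)
    (hbound : ∀ n : ℕ, 0 < n → ∀ x : Fin n → EuclideanSpace ℝ (Fin 2),
      (∀ i : Fin n, ∀ k : Fin 2, x i k ∈ Set.Icc (0 : ℝ) (Real.sqrt n)) →
      ∀ T : Finset (Sym2 (Fin n)), IsST (⊤ : SimpleGraph (Fin n)) T →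
        (∀ T', IsST (⊤ : SimpleGraph (Fin n)) T' →
          lenSum (eucLen x) T ≤ lenSum (eucLen x) T') →
        lenSum (eucLen x) T ≤ c₁ * n) :
    ∃ N : ℕ, ∀ n : ℕ, N ≤ n → ∀ x : Fin n → EuclideanSpace ℝ (Fin 2),
      (∀ i : Fin n, ∀ k : Fin 2, x i k ∈ Set.Icc (0 : ℝ) (Real.sqrt n)) →
      Set.InjOn (eucLen x) (⊤ : SimpleGraph (Fin n)).edgeSet →
      ∀ T : Finset (Sym2 (Fin n)), IsST (⊤ : SimpleGraph (Fin n)) T →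
        (∀ T', IsST (⊤ : SimpleGraph (Fin n)) T' →
          lenSum (eucLen x) T ≤ lenSum (eucLen x) T') →
        ∃ T'' : Finset (Sym2 (Fin n)), IsST (⊤ : SimpleGraph (Fin n)) T'' ∧
          lenSum (eucLen x) T'' ≤ 12 * c₁ * n ∧
          (n : ℝ) / 2 ≤ ((T'' \ T).card : ℝ) := by
  refine ⟨100, fun n hn x hx _ T hT _ => ?_⟩
  have : NeZero n := ⟨by omega⟩
  have hc := sub_one_le_of_mst_bound (hbound n (Nat.pos_of_neZero n))
  obtain ⟨e, he⟩ := exists_tourLength_le x hx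
  obtain ⟨k, hk, hkT⟩ := exists_card_mul_card_inter_le (s := Icc 1 3) ⟨1, by simp⟩
    (pairwiseDisjoint_tourTree e (by omega)) T
  have hST := isST_tourTree e hk (by rw [Finset.mem_Icc] at hk; omega)
  refine ⟨tourTree e k, hST, ?_, ?_⟩
  · linarith [lenSum_tourTree_le_of_mem_square hn hx he hk]
  · simpa using half_card_le_card_sdiff hST hT (by simp; omega) (by simpa using hkT)

/-- Suppose `c₁` is such that any `n` points in the square `[0,√n]²` have MST of length
at most `c₁ n`.  Then for all sufficiently large `n`, for any `n` points in `[0,√n]²`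
with distinct interpoint distances and MST `T_n`, there is a spanning tree `T''` with
`len(T'') ≤ 12 c₁ n` and `|T'' \ T_n| ≥ n/2`. -/
theorem far_spanning_tree_exists (c₁ : ℝ) (hc₁ : 0 < c₁)
    (hbound : ∀ n : ℕ, 0 < n → ∀ x : Fin n → EuclideanSpace ℝ (Fin 2),
      (∀ i : Fin n, ∀ k : Fin 2, x i k ∈ Set.Icc (0 : ℝ) (Real.sqrt n)) →
      ∀ T : Finset (Sym2 (Fin n)), IsST (⊤ : SimpleGraph (Fin n)) T →
        (∀ T', IsST (⊤ : SimpleGraph (Fin n)) T' →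
          lenSum (eucLen x) T ≤ lenSum (eucLen x) T') →
        lenSum (eucLen x) T ≤ c₁ * n) :
    ∃ N : ℕ, ∀ n : ℕ, N ≤ n → ∀ x : Fin n → EuclideanSpace ℝ (Fin 2),
      (∀ i : Fin n, ∀ k : Fin 2, x i k ∈ Set.Icc (0 : ℝ) (Real.sqrt n)) →
      Set.InjOn (eucLen x) (⊤ : SimpleGraph (Fin n)).edgeSet →
      ∀ T : Finset (Sym2 (Fin n)), IsST (⊤ : SimpleGraph (Fin n)) T →
        (∀ T', IsST (⊤ : SimpleGraph (Fin n)) T' →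
          lenSum (eucLen x) T ≤ lenSum (eucLen x) T') →
        ∃ T'' : Finset (Sym2 (Fin n)), IsST (⊤ : SimpleGraph (Fin n)) T'' ∧
          lenSum (eucLen x) T'' ≤ 12 * c₁ * n ∧
          (n : ℝ) / 2 ≤ ((T'' \ T).card : ℝ) :=
  far_spanning_tree_exists_general c₁ hbound
end

section
/- Let G be a countable connected network with distinct edge-lengths such that every G_t is locally finite, and suppose G has the uniqueness property: for every pair of vertices u, v, the graph G_{len(u,v)} has at most one infinite component. Define the minimal spanning forest F by: edge (v,w) ∈ F iff, with t = len(v,w), v and w lie in different components of G_t and at least one of those components is finite. Then an edge e = (v,w) belongs to F if and only if len(e) = perc(e), where perc(v,w) = inf{t : v, w in the same component of G_t}. -/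
open SimpleGraph

/-!
If `v` and `w` are joined inside `G_t` with `t = len(v,w)`, the finitely many edges of the
joining walk are all shorter than some `s < t`, so `perc(v,w) ≤ s < t`. Otherwise the set of
`t` joining them is exactly `(len(v,w), ∞)`, so `perc(v,w) = len(v,w)`. Hence `len = perc`
means precisely that `v` and `w` are separated in `G_{len(v,w)}`, and by the uniqueness
property two separated components cannot both be infinite, so this is the MSF criterion.
Local finiteness keeps the set of such `t` bounded below, so that the `sInf` defining `perc`
is not Lean's junk value `0`.
-/

section

variable {V : Type*} (G : SimpleGraph V) (len : Sym2 V → ℝ)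

lemma Gt_mono {t t' : ℝ} (h : t ≤ t') : Gt G len t ≤ Gt G len t' :=
  fun _ _ ha => ⟨ha.1, ha.2.trans_le h⟩

variable {G len}

lemma exists_lt_reachable_Gt_of_reachable {t : ℝ} {v w : V} (h : (Gt G len t).Reachable v w) :
    ∃ s < t, (Gt G len s).Reachable v w := by
  obtain ⟨p⟩ := h
  induction p with
  | nil => exact ⟨t - 1, by linarith, Reachable.refl _⟩
  | @cons u x _ hux _ ih =>
    obtain ⟨s, hst, hs⟩ := ih
    set s' := max s ((len s(u, x) + t) / 2)
    have hux' : len s(u, x) < s' := lt_max_of_lt_right (by linarith [hux.2])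
    refine ⟨s', max_lt hst (by linarith [hux.2]), ?_⟩
    exact (Adj.reachable (G := Gt G len s') ⟨hux.1, hux'⟩).trans
      (hs.mono (Gt_mono G len (le_max_left _ _)))

lemma bddBelow_setOf_reachable_Gt {t₀ : ℝ} {v w : V} (hne : v ≠ w)
    (hfin : ((Gt G len t₀).neighborSet v).Finite) :
    BddBelow {t | (Gt G len t).Reachable v w} := by
  obtain ⟨b, hb⟩ := (hfin.image fun u => len s(v, u)).bddBelow
  refine ⟨min t₀ b, fun t ⟨p⟩ => ?_⟩
  rcases le_or_gt t t₀ with hle | hlt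
  · cases p with
    | nil => exact absurd rfl hne
    | @cons _ u _ hvu _ =>
      have hu : u ∈ (Gt G len t₀).neighborSet v := ⟨hvu.1, hvu.2.trans_le hle⟩
      exact (min_le_right _ _).trans ((hb ⟨u, hu, rfl⟩).trans hvu.2.le)
  · exact (min_le_left _ _).trans hlt.le

lemma perc_lt_of_reachable {t : ℝ} {v w : V} (hbdd : BddBelow {t | (Gt G len t).Reachable v w})
    (h : (Gt G len t).Reachable v w) : perc G len v w < t := by
  obtain ⟨s, hst, hs⟩ := exists_lt_reachable_Gt_of_reachable h
  exact (csInf_le hbdd hs).trans_lt hst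

lemma perc_eq_of_not_reachable {v w : V} (hvw : G.Adj v w)
    (h : ¬ (Gt G len (len s(v, w))).Reachable v w) : perc G len v w = len s(v, w) := by
  have hset : {t | (Gt G len t).Reachable v w} = Set.Ioi (len s(v, w)) := by
    ext t
    refine ⟨fun ht => not_le.mp fun hle => h (ht.mono (Gt_mono G len hle)),
      fun ht => Adj.reachable ⟨hvw, ht⟩⟩
  rw [perc, hset, csInf_Ioi]

lemma len_eq_perc_iff_not_reachable {v w : V} (hvw : G.Adj v w)
    (hfin : ((Gt G len (len s(v, w))).neighborSet v).Finite) :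
    len s(v, w) = perc G len v w ↔ ¬ (Gt G len (len s(v, w))).Reachable v w := by
  refine ⟨fun heq hr => ?_, fun hnr => (perc_eq_of_not_reachable hvw hnr).symm⟩
  have := perc_lt_of_reachable (bddBelow_setOf_reachable_Gt hvw.ne hfin) hr
  exact this.ne' heq

end

theorem msf_perc_criterion_general {V : Type*}
    (G : SimpleGraph V) (len : Sym2 V → ℝ)
    (hlocfin : ∀ t : ℝ, ∀ v : V, ((Gt G len t).neighborSet v).Finite)
    (huniq : ∀ u v : V, ∀ c c' : (Gt G len (len s(u, v))).ConnectedComponent,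
      c.supp.Infinite → c'.supp.Infinite → c = c')
    (F : Set (Sym2 V))
    (hF : ∀ v w : V, G.Adj v w →
      (s(v, w) ∈ F ↔
        (¬ (Gt G len (len s(v, w))).Reachable v w ∧
          (((Gt G len (len s(v, w))).connectedComponentMk v).supp.Finite ∨
           ((Gt G len (len s(v, w))).connectedComponentMk w).supp.Finite)))) :
    ∀ v w : V, G.Adj v w → (s(v, w) ∈ F ↔ len s(v, w) = perc G len v w) := by
  intro v w hvw
  rw [hF v w hvw, len_eq_perc_iff_not_reachable hvw (hlocfin _ v)]
  refine ⟨And.left, fun hnr => ⟨hnr, ?_⟩⟩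
  by_contra! hinf
  exact hnr (ConnectedComponent.eq.mp (huniq v w _ _ hinf.1 hinf.2))

/-- The minimal spanning forest of a countable network with distinct edge-lengths satisfying
the uniqueness property: an edge `(v,w)` is in the MSF iff `len(v,w) = perc(v,w)`. -/
theorem msf_perc_criterion {V : Type*} [Countable V]
    (G : SimpleGraph V) (len : Sym2 V → ℝ)
    (hdist : Set.InjOn len G.edgeSet)
    (hlocfin : ∀ t : ℝ, ∀ v : V, ((Gt G len t).neighborSet v).Finite)
    (huniq : ∀ u v : V, ∀ c c' : (Gt G len (len s(u, v))).ConnectedComponent,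
      c.supp.Infinite → c'.supp.Infinite → c = c')
    (F : Set (Sym2 V))
    (hF : ∀ v w : V, G.Adj v w →
      (s(v, w) ∈ F ↔
        (¬ (Gt G len (len s(v, w))).Reachable v w ∧
          (((Gt G len (len s(v, w))).connectedComponentMk v).supp.Finite ∨
           ((Gt G len (len s(v, w))).connectedComponentMk w).supp.Finite)))) :
    ∀ v w : V, G.Adj v w → (s(v, w) ∈ F ↔ len s(v, w) = perc G len v w) :=
  msf_perc_criterion_general G len hlocfin huniq F hF
end
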